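/- arXiv:1503.03703 — 10 statements merged into one kernel-verified Lean document; each statement's English description precedes it below -/
import Mathlib

section
/- Let x⋆ ∈ Argmin(F + R), so that −∇F(x⋆) ∈ ∂R(x⋆). Define φ_k = ½‖x_k − x⋆‖², E_k = ½‖x_k − x_{k−1}‖², μ_k = 1 − γ_k/(2β) (which is positive since γ_k < 2β), ν_k = a_k − γ_k b_k/(2β), and v_k = x_{k+1} − x_k − (ν_k/μ_k)(x_k − x_{k−1}). Then for every k, φ_{k+1} − φ_k − a_k(φ_k − φ_{k−1}) ≤ −(μ_k/2)‖v_k‖² + (a_k + ν_k²/μ_k + γ_k b_k²/(2β))·E_k. (Key Lyapunov estimate (A.10) in the proof of Theorem 2.1.) -/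
open Filter Topology

/-- The subdifferential of a convex extended-real-valued function. -/
noncomputable def subdiff {n : ℕ} (R : EuclideanSpace ℝ (Fin n) → EReal)
    (x : EuclideanSpace ℝ (Fin n)) : Set (EuclideanSpace ℝ (Fin n)) :=
  {g | ∀ y, R x + ((inner ℝ g (y - x) : ℝ) : EReal) ≤ R y}

/-!
The subdifferential of a proper function is a monotone operator, so the optimality condition
`-∇F(x⋆) ∈ ∂R(x⋆)` and the inclusion defining `x_{k+1}` give
`0 ≤ ⟪a_k d − w − γ_k (∇F(y_{b,k}) − ∇F(x⋆)), x_{k+1} − x⋆⟫` with `d = x_k − x_{k−1}` and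
`w = x_{k+1} − x_k`. Cocoercivity, tested at `y_{b,k}` and `x⋆`, and Young's inequality absorb the
gradient term into `γ_k/(4β) ‖w − b_k d‖²`; what remains is a quadratic form in `w` and `d`,
and completing the square in `w` yields the estimate.
-/

open scoped RealInnerProductSpace

section InnerProductSpace

variable {E : Type*} [NormedAddCommGroup E] [InnerProductSpace ℝ E]

theorem real_inner_le_mul_norm_sq_add_norm_sq_div {β : ℝ} (hβ : 0 < β) (u v : E) :
    ⟪u, v⟫ ≤ β * ‖u‖ ^ 2 + ‖v‖ ^ 2 / (4 * β) := by
  have hsq : β * ‖u‖ ^ 2 + ‖v‖ ^ 2 / (4 * β) - ‖u‖ * ‖v‖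
      = (2 * β * ‖u‖ - ‖v‖) ^ 2 / (4 * β) := by
    field_simp
    ring
  have : 0 ≤ (2 * β * ‖u‖ - ‖v‖) ^ 2 / (4 * β) := by positivity
  linarith [real_inner_le_norm u v]

theorem neg_mul_norm_sq_add_inner_eq_norm_sub_smul_sq {μ : ℝ} (hμ : μ ≠ 0) (ν : ℝ) (w d : E) :
    -(μ / 2) * ‖w‖ ^ 2 + ν * ⟪w, d⟫
      = -(μ / 2) * ‖w - (ν / μ) • d‖ ^ 2 + ν ^ 2 / (2 * μ) * ‖d‖ ^ 2 := by
  rw [norm_sub_sq_real, real_inner_smul_right, norm_smul, Real.norm_eq_abs, mul_pow, sq_abs]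
  field_simp
  ring

/-- `Δ` stands for `∇F(y_b) − ∇F(x⋆)`. -/
theorem inertial_step_estimate {xnext x xprev xstar Δ : E} {a b γ β : ℝ} (hβ : 0 < β)
    (hγ : 0 ≤ γ)
    (hmono : 0 ≤ ⟪a • (x - xprev) - (xnext - x) - γ • Δ, xnext - xstar⟫)
    (hcoco : β * ‖Δ‖ ^ 2 ≤ ⟪Δ, x + b • (x - xprev) - xstar⟫) :
    (1 / 2) * ‖xnext - xstar‖ ^ 2 - (1 / 2) * ‖x - xstar‖ ^ 2
        - a * ((1 / 2) * ‖x - xstar‖ ^ 2 - (1 / 2) * ‖xprev - xstar‖ ^ 2)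
      ≤ -((1 - γ / (2 * β)) / 2) * ‖xnext - x‖ ^ 2
        + (a - γ * b / (2 * β)) * ⟪xnext - x, x - xprev⟫
        + (a / 2 + γ * b ^ 2 / (4 * β)) * ‖x - xprev‖ ^ 2 := by
  rw [show xnext - xstar = (x - xstar) + (xnext - x) by abel] at hmono ⊢
  rw [show x + b • (x - xprev) - xstar = (x - xstar) + b • (x - xprev) by abel] at hcoco
  rw [show xprev - xstar = (x - xstar) - (x - xprev) by abel]
  set z := x - xstar
  set d := x - xprev
  set w := xnext - x
  have hyoung := real_inner_le_mul_norm_sq_add_norm_sq_div hβ Δ (b • d - w)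
  rw [norm_sub_sq_real] at hyoung
  simp only [inner_add_right, inner_sub_left, inner_sub_right,
    real_inner_smul_left, real_inner_smul_right, real_inner_self_eq_norm_sq, norm_smul,
    Real.norm_eq_abs, mul_pow, sq_abs, norm_add_sq_real, norm_sub_sq_real] at hmono hcoco hyoung ⊢
  rw [real_inner_comm d w, real_inner_comm z w, real_inner_comm z d] at *
  linear_combination hmono + γ * hcoco + γ * hyoung

end InnerProductSpace

section Subdifferential

variable {n : ℕ} {R : EuclideanSpace ℝ (Fin n) → EReal}

theorem subdiff_ne_top (hRtop : ∃ y, R y ≠ ⊤) {g u : EuclideanSpace ℝ (Fin n)}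
    (hg : g ∈ subdiff R u) : R u ≠ ⊤ := by
  obtain ⟨y, hy⟩ := hRtop
  intro hu
  have h := hg y
  rw [hu, EReal.top_add_coe, top_le_iff] at h
  exact hy h

theorem subdiff_monotone (hRbot : ∀ x, R x ≠ ⊥) (hRtop : ∃ y, R y ≠ ⊤)
    {g h u v : EuclideanSpace ℝ (Fin n)} (hg : g ∈ subdiff R u) (hh : h ∈ subdiff R v) :
    0 ≤ ⟪g - h, u - v⟫ := by
  obtain ⟨r, hr⟩ : ∃ r : ℝ, R u = r :=
    ⟨_, (EReal.coe_toReal (subdiff_ne_top hRtop hg) (hRbot u)).symm⟩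
  obtain ⟨s, hs⟩ : ∃ s : ℝ, R v = s :=
    ⟨_, (EReal.coe_toReal (subdiff_ne_top hRtop hh) (hRbot v)).symm⟩
  have hgv := hg v
  have hhu := hh u
  rw [hr, hs, ← EReal.coe_add, EReal.coe_le_coe_iff] at hgv hhu
  rw [← neg_sub u v, inner_neg_right] at hgv
  rw [inner_sub_left]
  linarith

end Subdifferential

theorem ifb_lyapunov_estimate_general {n : ℕ}
    (R : EuclideanSpace ℝ (Fin n) → EReal)
    (Fgrad : EuclideanSpace ℝ (Fin n) → EuclideanSpace ℝ (Fin n))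
    (β : ℝ) (hβ : 0 < β)
    -- R is proper, convex and lower semicontinuous
    (hRbot : ∀ x, R x ≠ ⊥) (hRtop : ∃ x, R x ≠ ⊤)
    -- F is differentiable with β-cocoercive gradient
    (hcoco : ∀ u v, β * ‖Fgrad u - Fgrad v‖ ^ 2 ≤ (inner ℝ (Fgrad u - Fgrad v) (u - v) : ℝ))
    -- parameters
    (a b γ : ℕ → ℝ)
    (hγ : ∀ k, γ k ∈ Set.Ioo (0 : ℝ) (2 * β))
    -- a global minimizer x⋆ of F + R, i.e. −∇F(x⋆) ∈ ∂R(x⋆)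
    (xstar : EuclideanSpace ℝ (Fin n))
    (hstar : -Fgrad xstar ∈ subdiff R xstar)
    -- the iFB iterates (with the convention `x (0 - 1) = x 0`, i.e. x₋₁ = x₀)
    (x : ℕ → EuclideanSpace ℝ (Fin n))
    (hiter : ∀ k, ∃ g ∈ subdiff R (x (k + 1)),
      (x k + a k • (x k - x (k - 1))) - γ k • Fgrad (x k + b k • (x k - x (k - 1)))
        - x (k + 1) = γ k • g) :
    ∀ k : ℕ,
      (1 / 2) * ‖x (k + 1) - xstar‖ ^ 2 - (1 / 2) * ‖x k - xstar‖ ^ 2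
        - a k * ((1 / 2) * ‖x k - xstar‖ ^ 2 - (1 / 2) * ‖x (k - 1) - xstar‖ ^ 2)
      ≤ -((1 - γ k / (2 * β)) / 2) *
            ‖x (k + 1) - x k -
              ((a k - γ k * b k / (2 * β)) / (1 - γ k / (2 * β))) • (x k - x (k - 1))‖ ^ 2
        + (a k + (a k - γ k * b k / (2 * β)) ^ 2 / (1 - γ k / (2 * β))
            + γ k * b k ^ 2 / (2 * β)) * ((1 / 2) * ‖x k - x (k - 1)‖ ^ 2) := by
  intro k
  obtain ⟨hγpos, hγlt⟩ := hγ k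
  obtain ⟨g, hg, hstep⟩ := hiter k
  have hμ : 1 - γ k / (2 * β) ≠ 0 := (sub_pos.mpr ((div_lt_one (by linarith)).mpr hγlt)).ne'
  have hmono : 0 ≤ ⟪a k • (x k - x (k - 1)) - (x (k + 1) - x k)
      - γ k • (Fgrad (x k + b k • (x k - x (k - 1))) - Fgrad xstar), x (k + 1) - xstar⟫ := by
    have hsum : a k • (x k - x (k - 1)) - (x (k + 1) - x k)
        - γ k • (Fgrad (x k + b k • (x k - x (k - 1))) - Fgrad xstar)
          = γ k • (g - -Fgrad xstar) := by
      rw [smul_sub (γ k) g, ← hstep]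
      module
    rw [hsum, real_inner_smul_left]
    exact mul_nonneg hγpos.le (subdiff_monotone hRbot hRtop hg hstar)
  have hdescent := inertial_step_estimate hβ hγpos.le hmono (hcoco _ xstar)
  rw [neg_mul_norm_sq_add_inner_eq_norm_sub_smul_sq hμ] at hdescent
  refine hdescent.trans_eq ?_
  field_simp
  ring

/-- **Key Lyapunov estimate (A.10)** from the proof of Theorem 2.1: with
`φ_k = ½‖x_k − x⋆‖²`, `E_k = ½‖x_k − x_{k−1}‖²`, `μ_k = 1 − γ_k/(2β)`,
`ν_k = a_k − γ_k b_k/(2β)` and `v_k = x_{k+1} − x_k − (ν_k/μ_k)(x_k − x_{k−1})`,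
one has `φ_{k+1} − φ_k − a_k(φ_k − φ_{k−1}) ≤ −(μ_k/2)‖v_k‖² + (a_k + ν_k²/μ_k + γ_k b_k²/(2β)) E_k`. -/
theorem ifb_lyapunov_estimate {n : ℕ}
    (R : EuclideanSpace ℝ (Fin n) → EReal)
    (F : EuclideanSpace ℝ (Fin n) → ℝ)
    (Fgrad : EuclideanSpace ℝ (Fin n) → EuclideanSpace ℝ (Fin n))
    (β : ℝ) (hβ : 0 < β)
    -- R is proper, convex and lower semicontinuous
    (hRbot : ∀ x, R x ≠ ⊥) (hRtop : ∃ x, R x ≠ ⊤)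
    (hRconv : ∀ x y : EuclideanSpace ℝ (Fin n), ∀ t : ℝ, 0 ≤ t → t ≤ 1 →
      R (t • x + (1 - t) • y) ≤ (t : EReal) * R x + ((1 - t : ℝ) : EReal) * R y)
    (hRlsc : LowerSemicontinuous R)
    -- F is differentiable with β-cocoercive gradient
    (hFgrad : ∀ x, HasGradientAt F (Fgrad x) x)
    (hcoco : ∀ u v, β * ‖Fgrad u - Fgrad v‖ ^ 2 ≤ (inner ℝ (Fgrad u - Fgrad v) (u - v) : ℝ))
    -- parameters
    (a b γ : ℕ → ℝ)
    (ha : ∀ k, a k ∈ Set.Icc (0 : ℝ) 1)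
    (hb : ∀ k, b k ∈ Set.Icc (0 : ℝ) 1)
    (hγ : ∀ k, γ k ∈ Set.Ioo (0 : ℝ) (2 * β))
    -- a global minimizer x⋆ of F + R, i.e. −∇F(x⋆) ∈ ∂R(x⋆)
    (xstar : EuclideanSpace ℝ (Fin n))
    (hstar : -Fgrad xstar ∈ subdiff R xstar)
    -- the iFB iterates (with the convention `x (0 - 1) = x 0`, i.e. x₋₁ = x₀)
    (x : ℕ → EuclideanSpace ℝ (Fin n))
    (hiter : ∀ k, ∃ g ∈ subdiff R (x (k + 1)),
      (x k + a k • (x k - x (k - 1))) - γ k • Fgrad (x k + b k • (x k - x (k - 1)))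
        - x (k + 1) = γ k • g) :
    ∀ k : ℕ,
      (1 / 2) * ‖x (k + 1) - xstar‖ ^ 2 - (1 / 2) * ‖x k - xstar‖ ^ 2
        - a k * ((1 / 2) * ‖x k - xstar‖ ^ 2 - (1 / 2) * ‖x (k - 1) - xstar‖ ^ 2)
      ≤ -((1 - γ k / (2 * β)) / 2) *
            ‖x (k + 1) - x k -
              ((a k - γ k * b k / (2 * β)) / (1 - γ k / (2 * β))) • (x k - x (k - 1))‖ ^ 2
        + (a k + (a k - γ k * b k / (2 * β)) ^ 2 / (1 - γ k / (2 * β))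
            + γ k * b k ^ 2 / (2 * β)) * ((1 / 2) * ‖x k - x (k - 1)‖ ^ 2) :=
  ifb_lyapunov_estimate_general R Fgrad β hβ hRbot hRtop hcoco a b γ hγ xstar hstar x hiter
end

section
/- For every k, the subdifferential residual of the iFB iterates satisfies dist(0, ∇F(x_{k+1}) + ∂R(x_{k+1})) ≤ (1/γ_k)·(3‖x_k − x_{k−1}‖ + ‖x_{k+1} − x_k‖). (Residual bound from the proof of Theorem 3.4.) -/
/-!
The forward–backward step says exactly that `γ g := y_a − γ ∇F(y_b) − x_{k+1}` lies in
`γ ∂R(x_{k+1})`, so `∇F(x_{k+1}) + g` is an admissible element of the residual set. Multiplying by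
`γ` rewrites it as `(y_a − y_b) − [(x_{k+1} − y_b) − γ(∇F(x_{k+1}) − ∇F(y_b))]`; the bracket has norm
at most `‖x_{k+1} − y_b‖` because `Id − γ∇F` is nonexpansive for `γ ≤ 2β` (cocoercivity), and both
remaining distances are controlled by `‖x_k − x_{k−1}‖` and `‖x_{k+1} − x_k‖` since `a_k, b_k ∈ [0, 1]`.
-/

open Filter Topology

section InnerProductSpace

variable {E : Type*} [NormedAddCommGroup E] [InnerProductSpace ℝ E]

open scoped RealInnerProductSpace

def Cocoercive (β : ℝ) (T : E → E) : Prop :=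
  ∀ u v, β * ‖T u - T v‖ ^ 2 ≤ ⟪T u - T v, u - v⟫

theorem norm_sub_smul_le_of_mul_norm_sq_le_inner {β γ : ℝ} {p d : E} (hγ : 0 ≤ γ)
    (hγβ : γ ≤ 2 * β) (h : β * ‖p‖ ^ 2 ≤ ⟪p, d⟫) : ‖d - γ • p‖ ≤ ‖d‖ := by
  have hsq : ‖d - γ • p‖ ^ 2 ≤ ‖d‖ ^ 2 := by
    rw [norm_sub_sq_real, real_inner_smul_right, norm_smul, Real.norm_eq_abs, abs_of_nonneg hγ,
      real_inner_comm]
    nlinarith [mul_le_mul_of_nonneg_left h hγ,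
      mul_nonneg (mul_nonneg (sub_nonneg.2 hγβ) hγ) (sq_nonneg ‖p‖)]
  exact (sq_le_sq₀ (norm_nonneg _) (norm_nonneg _)).1 hsq

variable {β γ : ℝ} {T : E → E}

theorem Cocoercive.norm_sub_sub_smul_sub_le (hT : Cocoercive β T) (hγ : 0 ≤ γ) (hγβ : γ ≤ 2 * β)
    (u v : E) : ‖(u - v) - γ • (T u - T v)‖ ≤ ‖u - v‖ :=
  norm_sub_smul_le_of_mul_norm_sq_le_inner hγ hγβ (hT u v)

theorem Cocoercive.mul_norm_add_le_of_forward_backward_step (hT : Cocoercive β T) (hγ : 0 ≤ γ)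
    (hγβ : γ ≤ 2 * β) {ya yb x g : E} (hstep : ya - γ • T yb - x = γ • g) :
    γ * ‖T x + g‖ ≤ ‖ya - yb‖ + ‖x - yb‖ := by
  have hres : γ • (T x + g) = (ya - yb) - ((x - yb) - γ • (T x - T yb)) := by
    rw [smul_add, ← hstep]
    module
  calc γ * ‖T x + g‖ = ‖γ • (T x + g)‖ := by rw [norm_smul, Real.norm_of_nonneg hγ]
    _ ≤ ‖ya - yb‖ + ‖(x - yb) - γ • (T x - T yb)‖ := hres ▸ norm_sub_le _ _
    _ ≤ ‖ya - yb‖ + ‖x - yb‖ := by gcongr; exact hT.norm_sub_sub_smul_sub_le hγ hγβ x yb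

end InnerProductSpace

theorem norm_smul_le_of_mem_Icc {E : Type*} [SeminormedAddCommGroup E] [NormedSpace ℝ E]
    {t : ℝ} (ht : t ∈ Set.Icc (-1 : ℝ) 1) (v : E) : ‖t • v‖ ≤ ‖v‖ := by
  rw [norm_smul]
  exact mul_le_of_le_one_left (norm_nonneg v) (abs_le.2 ht)

theorem norm_extrapolation_sub_add_norm_sub_extrapolation_le {E : Type*}
    [SeminormedAddCommGroup E] [NormedSpace ℝ E] {a b : ℝ} (ha : a ∈ Set.Icc (0 : ℝ) 1)
    (hb : b ∈ Set.Icc (0 : ℝ) 1) (x d x' : E) :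
    ‖(x + a • d) - (x + b • d)‖ + ‖x' - (x + b • d)‖ ≤ 2 * ‖d‖ + ‖x' - x‖ := by
  have hab : ‖(a - b) • d‖ ≤ ‖d‖ :=
    norm_smul_le_of_mem_Icc ⟨by linarith [ha.1, hb.2], by linarith [ha.2, hb.1]⟩ d
  have hb' : ‖b • d‖ ≤ ‖d‖ := norm_smul_le_of_mem_Icc ⟨by linarith [hb.1], hb.2⟩ d
  have hsub : ‖(x' - x) - b • d‖ ≤ ‖x' - x‖ + ‖b • d‖ := norm_sub_le _ _
  rw [add_sub_add_left_eq_sub, ← sub_smul, sub_add_eq_sub_sub]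
  linarith

theorem ifb_residual_bound_general {n : ℕ}
    (R : EuclideanSpace ℝ (Fin n) → EReal)
    (Fgrad : EuclideanSpace ℝ (Fin n) → EuclideanSpace ℝ (Fin n))
    (β : ℝ)
    -- F is differentiable with β-cocoercive gradient
    (hcoco : ∀ u v, β * ‖Fgrad u - Fgrad v‖ ^ 2 ≤ (inner ℝ (Fgrad u - Fgrad v) (u - v) : ℝ))
    -- parameters
    (a b γ : ℕ → ℝ)
    (ha : ∀ k, a k ∈ Set.Icc (0 : ℝ) 1)
    (hb : ∀ k, b k ∈ Set.Icc (0 : ℝ) 1)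
    (hγ : ∀ k, γ k ∈ Set.Ioc (0 : ℝ) (2 * β))
    -- the iFB iterates (with the convention `x (0 - 1) = x 0`, i.e. x₋₁ = x₀)
    (x : ℕ → EuclideanSpace ℝ (Fin n))
    (hiter : ∀ k, ∃ g ∈ subdiff R (x (k + 1)),
      (x k + a k • (x k - x (k - 1))) - γ k • Fgrad (x k + b k • (x k - x (k - 1)))
        - x (k + 1) = γ k • g) :
    ∀ k : ℕ,
      Metric.infDist (0 : EuclideanSpace ℝ (Fin n))
          {z | ∃ g ∈ subdiff R (x (k + 1)), z = Fgrad (x (k + 1)) + g}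
        ≤ (1 / γ k) * (3 * ‖x k - x (k - 1)‖ + ‖x (k + 1) - x k‖) := by
  intro k
  obtain ⟨g, hg, hstep⟩ := hiter k
  obtain ⟨hγ0, hγβ⟩ := hγ k
  have hdist : Metric.infDist 0 {z | ∃ g ∈ subdiff R (x (k + 1)), z = Fgrad (x (k + 1)) + g}
      ≤ ‖Fgrad (x (k + 1)) + g‖ := by
    rw [← dist_zero_left]
    exact Metric.infDist_le_dist_of_mem ⟨g, hg, rfl⟩
  have hres := (Cocoercive.mul_norm_add_le_of_forward_backward_step hcoco hγ0.le hγβ hstep).trans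
    (norm_extrapolation_sub_add_norm_sub_extrapolation_le (ha k) (hb k) (x k)
      (x k - x (k - 1)) (x (k + 1)))
  rw [one_div_mul_eq_div, le_div_iff₀ hγ0]
  nlinarith [norm_nonneg (x k - x (k - 1))]

/-- **Residual bound** from the proof of Theorem 3.4:
`dist(0, ∇F(x_{k+1}) + ∂R(x_{k+1})) ≤ (1/γ_k)(3‖x_k − x_{k−1}‖ + ‖x_{k+1} − x_k‖)`. -/
theorem ifb_residual_bound {n : ℕ}
    (R : EuclideanSpace ℝ (Fin n) → EReal)
    (F : EuclideanSpace ℝ (Fin n) → ℝ)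
    (Fgrad : EuclideanSpace ℝ (Fin n) → EuclideanSpace ℝ (Fin n))
    (β : ℝ) (hβ : 0 < β)
    -- R is proper, convex and lower semicontinuous
    (hRbot : ∀ x, R x ≠ ⊥) (hRtop : ∃ x, R x ≠ ⊤)
    (hRconv : ∀ x y : EuclideanSpace ℝ (Fin n), ∀ t : ℝ, 0 ≤ t → t ≤ 1 →
      R (t • x + (1 - t) • y) ≤ (t : EReal) * R x + ((1 - t : ℝ) : EReal) * R y)
    (hRlsc : LowerSemicontinuous R)
    -- F is differentiable with β-cocoercive gradient
    (hFgrad : ∀ x, HasGradientAt F (Fgrad x) x)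
    (hcoco : ∀ u v, β * ‖Fgrad u - Fgrad v‖ ^ 2 ≤ (inner ℝ (Fgrad u - Fgrad v) (u - v) : ℝ))
    -- parameters
    (a b γ : ℕ → ℝ)
    (ha : ∀ k, a k ∈ Set.Icc (0 : ℝ) 1)
    (hb : ∀ k, b k ∈ Set.Icc (0 : ℝ) 1)
    (hγ : ∀ k, γ k ∈ Set.Ioc (0 : ℝ) (2 * β))
    -- the iFB iterates (with the convention `x (0 - 1) = x 0`, i.e. x₋₁ = x₀)
    (x : ℕ → EuclideanSpace ℝ (Fin n))
    (hiter : ∀ k, ∃ g ∈ subdiff R (x (k + 1)),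
      (x k + a k • (x k - x (k - 1))) - γ k • Fgrad (x k + b k • (x k - x (k - 1)))
        - x (k + 1) = γ k • g) :
    ∀ k : ℕ,
      Metric.infDist (0 : EuclideanSpace ℝ (Fin n))
          {z | ∃ g ∈ subdiff R (x (k + 1)), z = Fgrad (x (k + 1)) + g}
        ≤ (1 / γ k) * (3 * ‖x k - x (k - 1)‖ + ‖x (k + 1) - x k‖) :=
  ifb_residual_bound_general R Fgrad β hcoco a b γ ha hb hγ x hiter
end

section
/- Consider the Forward–Backward iteration in which x_k satisfies x_{k−1} − γ_{k−1}∇F(x_{k−1}) − x_k ∈ γ_{k−1}∂R(x_k) with γ_{k−1} ∈ (0, 2β], and let x⋆ ∈ Argmin(F + R). Then ‖x_k − x⋆‖² ≤ ‖x_{k−1} − x⋆‖² − γ_{k−1}²·dist(−∇F(x⋆), ∂R(x_k))², where dist(−∇F(x⋆), ∂R(x_k)) = inf{‖∇F(x⋆) + g‖ : g ∈ ∂R(x_k)}. (Per-iteration decrease estimate from the proof of Proposition 3.6(i).) -/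
/-! With `a = ∇F(xₖ₋₁) − ∇F(x⋆)` and `b = ∇F(x⋆) + g` for the subgradient `g ∈ ∂R(xₖ)` of the
step, one has `xₖ − x⋆ = (xₖ₋₁ − x⋆) − γ (a + b)`. Expanding the square, cocoercivity of `∇F`
absorbs the `a`-terms because `γ ≤ 2β`, and monotonicity of `∂R` (`⟨b, xₖ − x⋆⟩ ≥ 0`) bounds
the rest by `−γ²‖b‖²`, while `‖b‖` dominates the distance from `−∇F(x⋆)` to `∂R(xₖ)`. -/

open Filter Topology

open RealInnerProductSpace

section InnerProductSpace

variable {E : Type*} [NormedAddCommGroup E] [InnerProductSpace ℝ E]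

theorem norm_sub_smul_add_sq_eq (v a b : E) (γ : ℝ) :
    ‖v - γ • (a + b)‖ ^ 2 = ‖v‖ ^ 2 - 2 * γ * ⟪a, v⟫ - 2 * γ * ⟪b, v - γ • (a + b)⟫
      + γ ^ 2 * ‖a‖ ^ 2 - γ ^ 2 * ‖b‖ ^ 2 := by
  rw [norm_sub_sq_real, norm_smul, Real.norm_eq_abs, mul_pow, sq_abs, norm_add_sq_real,
    real_inner_smul_right, inner_sub_right, real_inner_smul_right, inner_add_right,
    inner_add_right, real_inner_self_eq_norm_sq, real_inner_comm a v, real_inner_comm b v,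
    real_inner_comm a b]
  ring

theorem norm_sub_smul_add_sq_le {v a b : E} {β γ : ℝ} (hγ₀ : 0 ≤ γ) (hγβ : γ ≤ 2 * β)
    (hcoco : β * ‖a‖ ^ 2 ≤ ⟪a, v⟫) (hmono : 0 ≤ ⟪b, v - γ • (a + b)⟫) :
    ‖v - γ • (a + b)‖ ^ 2 ≤ ‖v‖ ^ 2 - γ ^ 2 * ‖b‖ ^ 2 := by
  rw [norm_sub_smul_add_sq_eq]
  nlinarith [mul_le_mul_of_nonneg_left hcoco hγ₀, mul_nonneg hγ₀ hmono,
    mul_nonneg (mul_nonneg hγ₀ (sub_nonneg.2 hγβ)) (sq_nonneg ‖a‖)]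

end InnerProductSpace

section Subdifferential

variable {n : ℕ} {R : EuclideanSpace ℝ (Fin n) → EReal} {x y g h : EuclideanSpace ℝ (Fin n)}

theorem ne_top_of_mem_subdiff (hg : g ∈ subdiff R x) (hy : R y ≠ ⊤) : R x ≠ ⊤ := by
  intro hx
  have := hg y
  rw [hx, EReal.top_add_coe, top_le_iff] at this
  exact hy this

theorem inner_nonneg_of_mem_subdiff (hx : R x ≠ ⊥) (hy : R y ≠ ⊥) (hxtop : R x ≠ ⊤)
    (hg : g ∈ subdiff R x) (hh : h ∈ subdiff R y) : 0 ≤ ⟪g - h, x - y⟫ := by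
  obtain ⟨r, hr⟩ : ∃ r : ℝ, R x = r := ⟨_, (EReal.coe_toReal hxtop hx).symm⟩
  obtain ⟨s, hs⟩ : ∃ s : ℝ, R y = s :=
    ⟨_, (EReal.coe_toReal (ne_top_of_mem_subdiff hh hxtop) hy).symm⟩
  have hgy := hg y
  have hhx := hh x
  rw [hr, hs] at hgy hhx
  norm_cast at hgy hhx
  have hyx : y - x = -(x - y) := (neg_sub x y).symm
  rw [hyx, inner_neg_right] at hgy
  rw [inner_sub_left]
  linarith

end Subdifferential

theorem fb_periteration_decrease_general {n : ℕ}
    (R : EuclideanSpace ℝ (Fin n) → EReal)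
    (Fgrad : EuclideanSpace ℝ (Fin n) → EuclideanSpace ℝ (Fin n))
    (β : ℝ)
    -- R is proper, convex and lower semicontinuous
    (hRbot : ∀ x, R x ≠ ⊥) (hRtop : ∃ x, R x ≠ ⊤)
    -- F is differentiable with β-cocoercive gradient
    (hcoco : ∀ u v, β * ‖Fgrad u - Fgrad v‖ ^ 2 ≤ (inner ℝ (Fgrad u - Fgrad v) (u - v) : ℝ))
    -- step-size
    (γ : ℝ) (hγ : γ ∈ Set.Ioc (0 : ℝ) (2 * β))
    -- a global minimizer x⋆ of F + R, i.e. −∇F(x⋆) ∈ ∂R(x⋆)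
    (xstar : EuclideanSpace ℝ (Fin n))
    (hstar : -Fgrad xstar ∈ subdiff R xstar)
    -- one Forward–Backward step
    (xprev xcur : EuclideanSpace ℝ (Fin n))
    (hiter : ∃ g ∈ subdiff R xcur, xprev - γ • Fgrad xprev - xcur = γ • g) :
    ‖xcur - xstar‖ ^ 2 ≤ ‖xprev - xstar‖ ^ 2
      - γ ^ 2 * (Metric.infDist (-Fgrad xstar) (subdiff R xcur)) ^ 2 := by
  obtain ⟨g, hg, hstep⟩ := hiter
  obtain ⟨x₀, hx₀⟩ := hRtop
  have hcur : xcur - xstar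
      = (xprev - xstar) - γ • ((Fgrad xprev - Fgrad xstar) + (Fgrad xstar + g)) := by
    have hxcur : xcur = xprev - γ • Fgrad xprev - γ • g := by rw [← hstep]; abel
    rw [hxcur, smul_add, smul_sub, smul_add]
    abel
  have hmono : 0 ≤ ⟪Fgrad xstar + g, xcur - xstar⟫ := by
    have := inner_nonneg_of_mem_subdiff (hRbot xcur) (hRbot xstar)
      (ne_top_of_mem_subdiff hg hx₀) hg hstar
    rwa [sub_neg_eq_add, add_comm] at this
  have hdist : Metric.infDist (-Fgrad xstar) (subdiff R xcur) ≤ ‖Fgrad xstar + g‖ := by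
    have := Metric.infDist_le_dist_of_mem (x := -Fgrad xstar) hg
    rwa [dist_eq_norm, ← neg_add', norm_neg] at this
  rw [hcur] at hmono ⊢
  calc _ ≤ ‖xprev - xstar‖ ^ 2 - γ ^ 2 * ‖Fgrad xstar + g‖ ^ 2 :=
        norm_sub_smul_add_sq_le hγ.1.le hγ.2 (hcoco xprev xstar) hmono
    _ ≤ _ := by gcongr; exact Metric.infDist_nonneg

/-- **Per-iteration decrease estimate** from the proof of Proposition 3.6(i): for a
Forward–Backward step `xprev ↦ xcur` with step-size `γ ∈ (0, 2β]` and a minimizer `x⋆`,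
`‖xcur − x⋆‖² ≤ ‖xprev − x⋆‖² − γ²·dist(−∇F(x⋆), ∂R(xcur))²`. -/
theorem fb_periteration_decrease {n : ℕ}
    (R : EuclideanSpace ℝ (Fin n) → EReal)
    (F : EuclideanSpace ℝ (Fin n) → ℝ)
    (Fgrad : EuclideanSpace ℝ (Fin n) → EuclideanSpace ℝ (Fin n))
    (β : ℝ) (hβ : 0 < β)
    -- R is proper, convex and lower semicontinuous
    (hRbot : ∀ x, R x ≠ ⊥) (hRtop : ∃ x, R x ≠ ⊤)
    (hRconv : ∀ x y : EuclideanSpace ℝ (Fin n), ∀ t : ℝ, 0 ≤ t → t ≤ 1 →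
      R (t • x + (1 - t) • y) ≤ (t : EReal) * R x + ((1 - t : ℝ) : EReal) * R y)
    (hRlsc : LowerSemicontinuous R)
    -- F is differentiable with β-cocoercive gradient
    (hFgrad : ∀ x, HasGradientAt F (Fgrad x) x)
    (hcoco : ∀ u v, β * ‖Fgrad u - Fgrad v‖ ^ 2 ≤ (inner ℝ (Fgrad u - Fgrad v) (u - v) : ℝ))
    -- step-size
    (γ : ℝ) (hγ : γ ∈ Set.Ioc (0 : ℝ) (2 * β))
    -- a global minimizer x⋆ of F + R, i.e. −∇F(x⋆) ∈ ∂R(x⋆)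
    (xstar : EuclideanSpace ℝ (Fin n))
    (hstar : -Fgrad xstar ∈ subdiff R xstar)
    -- one Forward–Backward step
    (xprev xcur : EuclideanSpace ℝ (Fin n))
    (hiter : ∃ g ∈ subdiff R xcur, xprev - γ • Fgrad xprev - xcur = γ • g) :
    ‖xcur - xstar‖ ^ 2 ≤ ‖xprev - xstar‖ ^ 2
      - γ ^ 2 * (Metric.infDist (-Fgrad xstar) (subdiff R xcur)) ^ 2 :=
  fb_periteration_decrease_general R Fgrad β hRbot hRtop hcoco γ hγ xstar hstar xprev xcur hiter
end

section
/- Let x⋆ ∈ Argmin(F + R), assume F is twice continuously differentiable on a neighborhood of x⋆, and assume the non-degeneracy condition (ND): −∇F(x⋆) ∈ ri(∂R(x⋆)), and the restricted injectivity condition (RI): ker(∇²F(x⋆)) ∩ T_{x⋆} = {0}. Then x⋆ is the unique global minimizer of F + R. (Proposition 4.1(i).) -/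
/-!
Let `z` be a second minimizer and `h = z - x⋆`. The gradient inequality for `F` at `x⋆` and the
subgradient inequality for `R` at `x⋆` with the subgradient `-∇F(x⋆)` add up to
`(F + R)(z) ≥ (F + R)(x⋆)`, which is an equality; hence both inequalities are equalities.

For `R`, this says that `g ↦ ⟪g, h⟫` attains its maximum over `∂R(x⋆)` at `-∇F(x⋆)`. A linear
functional maximal at a relative interior point is constant on the set, so `h ∈ T_{x⋆}`.

For `F`, it says that `F` is affine on `[x⋆, z]`, so `∇F` is constant there and `∇²F(x⋆) h = 0`.
Now (RI) forces `h = 0`.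
-/

open Filter Topology

open Set InnerProductSpace

section Convex

variable {E : Type*} [NormedAddCommGroup E] [NormedSpace ℝ E]

theorem ConvexOn.add_le_of_hasFDerivAt {f : E → ℝ} {f' : E →L[ℝ] ℝ} {x : E}
    (hf : ConvexOn ℝ univ f) (hx : HasFDerivAt f f' x) (y : E) :
    f x + f' (y - x) ≤ f y := by
  have hline : HasDerivAt (f ∘ AffineMap.lineMap (k := ℝ) x y) (f' (y - x)) 0 := by
    have hx' : HasFDerivAt f f' (AffineMap.lineMap (k := ℝ) x y 0) := by simpa using hx
    exact hx'.comp_hasDerivAt 0 AffineMap.hasDerivAt_lineMap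
  have := (hf.comp_affineMap (AffineMap.lineMap x y)).le_slope_of_hasDerivAt
    (mem_univ 0) (mem_univ 1) one_pos hline
  simp only [slope_def_field, Function.comp_apply, AffineMap.lineMap_apply_zero,
    AffineMap.lineMap_apply_one, sub_zero, div_one] at this
  linarith

theorem HasFDerivAt.eq_of_forall_add_le {f : E → ℝ} {f' c : E →L[ℝ] ℝ} {w : E}
    (hw : HasFDerivAt f f' w) (hc : ∀ y, f w + c (y - w) ≤ f y) : f' = c := by
  have hmin : IsLocalMin (fun y => f y - c y) w :=
    Eventually.of_forall fun y => by
      have := hc y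
      rw [map_sub] at this
      simp only
      linarith
  exact sub_eq_zero.mp (hmin.hasFDerivAt_eq_zero (hw.sub c.hasFDerivAt))

theorem ConvexOn.hasFDerivAt_eq_of_mem_segment {f : E → ℝ} {f' : E → E →L[ℝ] ℝ} {x z w : E}
    (hf : ConvexOn ℝ univ f) (hf' : ∀ y, HasFDerivAt f (f' y) y)
    (hz : f z = f x + f' x (z - x)) (hw : w ∈ segment ℝ x z) : f' w = f' x := by
  set g : E → ℝ := fun y => f y - f' x y
  have hg : ConvexOn ℝ univ g := hf.sub ((f' x).toLinearMap.concaveOn convex_univ)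
  have hgx : ∀ y, g x ≤ g y := fun y => by
    have := hf.add_le_of_hasFDerivAt (hf' x) y
    rw [map_sub] at this
    simp only [g]
    linarith
  have hgz : g z = g x := by simp only [g, hz, map_sub]; ring
  have hgw : g w ≤ g x := by
    simpa [hgz] using hg.le_on_segment (mem_univ x) (mem_univ z) hw
  refine (hf' w).eq_of_forall_add_le fun y => ?_
  have := hgw.trans (hgx y)
  simp only [g] at this
  rw [map_sub]
  linarith

theorem fderiv_apply_eq_zero_of_forall_mem_segment {F : Type*} [NormedAddCommGroup F]
    [NormedSpace ℝ F] {f : E → F} {x v : E} (hf : ∀ y ∈ segment ℝ x (x + v), f y = f x) :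
    fderiv ℝ f x v = 0 := by
  by_cases hd : DifferentiableAt ℝ f x
  · have hline : HasDerivAt (f ∘ AffineMap.lineMap (k := ℝ) x (x + v)) (fderiv ℝ f x v) 0 := by
      have hx : HasFDerivAt f (fderiv ℝ f x) (AffineMap.lineMap (k := ℝ) x (x + v) 0) := by
        simpa using hd.hasFDerivAt
      simpa using hx.comp_hasDerivAt 0 AffineMap.hasDerivAt_lineMap
    have hconst : HasDerivWithinAt (f ∘ AffineMap.lineMap (k := ℝ) x (x + v)) 0 (Icc 0 1) 0 := by
      refine (hasDerivWithinAt_const 0 _ (f x)).congr (fun t ht => ?_) (by simp)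
      exact hf _ (segment_eq_image_lineMap ℝ x (x + v) ▸ mem_image_of_mem _ ht)
    have huniq : UniqueDiffWithinAt ℝ (Icc (0 : ℝ) 1) 0 :=
      uniqueDiffOn_Icc_zero_one 0 (left_mem_Icc.mpr zero_le_one)
    exact (hline.hasDerivWithinAt.derivWithin huniq).symm.trans (hconst.derivWithin huniq)
  · simp [fderiv_zero_of_not_differentiableAt hd]

theorem exists_pos_add_smul_sub_mem_of_mem_intrinsicInterior {S : Set E} {g₀ g : E}
    (hg₀ : g₀ ∈ intrinsicInterior ℝ S) (hg : g ∈ S) :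
    ∃ t : ℝ, 0 < t ∧ g₀ + t • (g₀ - g) ∈ S := by
  obtain ⟨y, hy, rfl⟩ := mem_intrinsicInterior.mp hg₀
  have hmem : ∀ t : ℝ, (y : E) + t • ((y : E) - g) ∈ affineSpan ℝ S := fun t => by
    simpa [vsub_eq_sub, vadd_eq_add, add_comm] using
      AffineSubspace.smul_vsub_vadd_mem _ t y.2 (subset_affineSpan ℝ S hg) y.2
  let c : ℝ → affineSpan ℝ S := fun t => ⟨y + t • ((y : E) - g), hmem t⟩
  have hc : Continuous c := by fun_prop
  have hc0 : c 0 = y := by ext; simp [c]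
  have hnhds : c ⁻¹' ((↑) ⁻¹' S) ∈ 𝓝 (0 : ℝ) :=
    hc.continuousAt.preimage_mem_nhds (hc0 ▸ mem_interior_iff_mem_nhds.mp hy)
  have hpos : ∀ᶠ t in 𝓝[>] (0 : ℝ), c t ∈ (↑) ⁻¹' S ∧ 0 < t :=
    Eventually.and (mem_nhdsWithin_of_mem_nhds hnhds) self_mem_nhdsWithin
  obtain ⟨t, hts, ht⟩ := hpos.exists
  exact ⟨t, ht, hts⟩

theorem IsMaxOn.eq_of_mem_intrinsicInterior {S : Set E} {ℓ : E →ₗ[ℝ] ℝ} {g₀ g : E}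
    (hℓ : IsMaxOn ℓ S g₀) (hg₀ : g₀ ∈ intrinsicInterior ℝ S) (hg : g ∈ S) : ℓ g = ℓ g₀ := by
  obtain ⟨t, ht, hmem⟩ := exists_pos_add_smul_sub_mem_of_mem_intrinsicInterior hg₀ hg
  have hle : ℓ (g₀ + t • (g₀ - g)) ≤ ℓ g₀ := hℓ hmem
  rw [map_add, map_smul, map_sub, smul_eq_mul] at hle
  have hge : ℓ g₀ ≤ ℓ g := by nlinarith
  exact le_antisymm (hℓ hg) hge

end Convex

theorem mem_orthogonal_direction_affineSpan_of_inner_eq {E : Type*} [NormedAddCommGroup E]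
    [InnerProductSpace ℝ E] {S : Set E} {v : E} {c : ℝ} (hS : ∀ g ∈ S, ⟪v, g⟫_ℝ = c) :
    v ∈ (affineSpan ℝ S).directionᗮ := by
  have hspan : (affineSpan ℝ S).direction ≤ LinearMap.ker (innerₛₗ ℝ v) := by
    rw [direction_affineSpan, vectorSpan_def, Submodule.span_le]
    rintro _ ⟨p, hp, q, hq, rfl⟩
    simp [inner_sub_right, hS p hp, hS q hq]
  exact (Submodule.mem_orthogonal' _ v).mpr fun u hu => hspan hu

theorem exists_coe_eq_of_forall_add_le {α : Type*} {F : α → ℝ} {R : α → EReal} {z : α}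
    (hRbot : ∀ x, R x ≠ ⊥) (hRtop : ∃ x, R x ≠ ⊤)
    (hz : ∀ y, (F z : EReal) + R z ≤ F y + R y) : ∃ r : ℝ, R z = r := by
  obtain ⟨x, hx⟩ := hRtop
  refine ⟨(R z).toReal, (EReal.coe_toReal (fun htop => ?_) (hRbot z)).symm⟩
  have := hz x
  rw [htop, EReal.add_top_of_ne_bot (EReal.coe_ne_bot _), top_le_iff] at this
  exact (EReal.add_lt_top (EReal.coe_ne_top _) hx).ne this

theorem inner_le_sub_of_mem_subdiff {n : ℕ} {R : EuclideanSpace ℝ (Fin n) → EReal}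
    {x z g : EuclideanSpace ℝ (Fin n)} {rx rz : ℝ} (hx : R x = rx) (hz : R z = rz)
    (hg : g ∈ subdiff R x) : ⟪g, z - x⟫_ℝ ≤ rz - rx := by
  have := hg z
  rw [hx, hz, ← EReal.coe_add, EReal.coe_le_coe_iff] at this
  linarith

theorem unique_minimizer_general {n : ℕ}
    (R : EuclideanSpace ℝ (Fin n) → EReal)
    (F : EuclideanSpace ℝ (Fin n) → ℝ)
    (Fgrad : EuclideanSpace ℝ (Fin n) → EuclideanSpace ℝ (Fin n))
    -- R is proper, convex and lower semicontinuous
    (hRbot : ∀ x, R x ≠ ⊥) (hRtop : ∃ x, R x ≠ ⊤)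
    -- F is convex and differentiable with (1/β)-Lipschitz gradient
    (hFconv : ConvexOn ℝ Set.univ F)
    (hFgrad : ∀ x, HasGradientAt F (Fgrad x) x)
    -- x⋆ is a global minimizer of F + R
    (xstar : EuclideanSpace ℝ (Fin n))
    (hmin : ∀ y, (F xstar : EReal) + R xstar ≤ (F y : EReal) + R y)
    -- non-degeneracy condition (ND)
    (hND : -Fgrad xstar ∈ intrinsicInterior ℝ (subdiff R xstar))
    -- restricted injectivity condition (RI): ker(∇²F(x⋆)) ∩ T_{x⋆} = {0}
    (hRI : ∀ h : EuclideanSpace ℝ (Fin n),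
      h ∈ ((affineSpan ℝ (subdiff R xstar)).direction)ᗮ →
      fderiv ℝ Fgrad xstar h = 0 → h = 0) :
    ∀ z, (∀ y, (F z : EReal) + R z ≤ (F y : EReal) + R y) → z = xstar := by
  intro z hz
  obtain ⟨rx, hrx⟩ := exists_coe_eq_of_forall_add_le hRbot hRtop hmin
  obtain ⟨rz, hrz⟩ := exists_coe_eq_of_forall_add_le hRbot hRtop hz
  have hsum : F z + rz = F xstar + rx := by
    have := le_antisymm (hz xstar) (hmin z)
    rw [hrx, hrz] at this
    exact_mod_cast this
  have hR g (hg : g ∈ subdiff R xstar) := inner_le_sub_of_mem_subdiff hrx hrz hg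
  have hF := hFconv.add_le_of_hasFDerivAt (hFgrad xstar).hasFDerivAt z
  rw [toDual_apply_apply] at hF
  have htangent : F z = F xstar + ⟪Fgrad xstar, z - xstar⟫_ℝ := by
    have := hR _ (intrinsicInterior_subset hND)
    rw [inner_neg_left] at this
    linarith
  have hmax : IsMaxOn (innerₛₗ ℝ (z - xstar)) (subdiff R xstar) (-Fgrad xstar) := fun g hg => by
    simp only [mem_ofPred_eq, innerₛₗ_apply_apply, real_inner_comm _ (z - xstar), inner_neg_left]
    linarith [hR g hg]
  have horth : z - xstar ∈ (affineSpan ℝ (subdiff R xstar)).directionᗮ :=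
    mem_orthogonal_direction_affineSpan_of_inner_eq fun g hg =>
      hmax.eq_of_mem_intrinsicInterior hND hg
  have hconst : ∀ y ∈ segment ℝ xstar (xstar + (z - xstar)), Fgrad y = Fgrad xstar :=
    fun y hy => (toDual ℝ _).injective <|
      hFconv.hasFDerivAt_eq_of_mem_segment (f' := fun y => toDual ℝ _ (Fgrad y))
        (fun y => (hFgrad y).hasFDerivAt) htangent
        (by rwa [add_sub_cancel] at hy)
  exact sub_eq_zero.mp (hRI _ horth (fderiv_apply_eq_zero_of_forall_mem_segment hconst))

/-- **Proposition 4.1(i): uniqueness of the minimizer** under the non-degeneracy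
condition (ND) `−∇F(x⋆) ∈ ri(∂R(x⋆))` and the restricted injectivity condition (RI)
`ker(∇²F(x⋆)) ∩ T_{x⋆} = {0}`, where `T_{x⋆}` is the orthogonal complement of the
subspace parallel to the affine hull of `∂R(x⋆)`. -/
theorem unique_minimizer {n : ℕ}
    (R : EuclideanSpace ℝ (Fin n) → EReal)
    (F : EuclideanSpace ℝ (Fin n) → ℝ)
    (Fgrad : EuclideanSpace ℝ (Fin n) → EuclideanSpace ℝ (Fin n))
    (β : ℝ) (hβ : 0 < β)
    -- R is proper, convex and lower semicontinuous
    (hRbot : ∀ x, R x ≠ ⊥) (hRtop : ∃ x, R x ≠ ⊤)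
    (hRconv : ∀ x y : EuclideanSpace ℝ (Fin n), ∀ t : ℝ, 0 ≤ t → t ≤ 1 →
      R (t • x + (1 - t) • y) ≤ (t : EReal) * R x + ((1 - t : ℝ) : EReal) * R y)
    (hRlsc : LowerSemicontinuous R)
    -- F is convex and differentiable with (1/β)-Lipschitz gradient
    (hFconv : ConvexOn ℝ Set.univ F)
    (hFgrad : ∀ x, HasGradientAt F (Fgrad x) x)
    (hFlip : ∀ x y, ‖Fgrad x - Fgrad y‖ ≤ (1 / β) * ‖x - y‖)
    -- x⋆ is a global minimizer of F + R
    (xstar : EuclideanSpace ℝ (Fin n))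
    (hmin : ∀ y, (F xstar : EReal) + R xstar ≤ (F y : EReal) + R y)
    -- F is C² on a neighborhood of x⋆
    (hC2 : ∃ U ∈ 𝓝 xstar, ContDiffOn ℝ 2 F U)
    -- non-degeneracy condition (ND)
    (hND : -Fgrad xstar ∈ intrinsicInterior ℝ (subdiff R xstar))
    -- restricted injectivity condition (RI): ker(∇²F(x⋆)) ∩ T_{x⋆} = {0}
    (hRI : ∀ h : EuclideanSpace ℝ (Fin n),
      h ∈ ((affineSpan ℝ (subdiff R xstar)).direction)ᗮ →
      fderiv ℝ Fgrad xstar h = 0 → h = 0) :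
    ∀ z, (∀ y, (F z : EReal) + R z ≤ (F y : EReal) + R y) → z = xstar :=
  unique_minimizer_general R F Fgrad hRbot hRtop hFconv hFgrad xstar hmin hND hRI
end

section
/- Let x⋆ ∈ ℝⁿ, let T ⊆ ℝⁿ be a linear subspace with orthogonal projection P_T, and let R̃ be a twice continuously differentiable real-valued function on a neighborhood of x⋆ such that, for some ε > 0, for every h ∈ T with ‖h‖ < ε the set ∂R(x⋆ + h) is nonempty and P_T v = P_T ∇R̃(x⋆ + h) for every v ∈ ∂R(x⋆ + h). Then P_T ∇²R̃(x⋆) P_T is positive semidefinite, i.e. ⟨h, ∇²R̃(x⋆) h⟩ ≥ 0 for all h ∈ T. (Abstract form of Lemma 4.3(ii): the Riemannian Hessian of a convex function along an affine subspace is positive semidefinite.) -/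
/-!
Along the segment `t ↦ x⋆ + t • h` with `h ∈ T`, pair a subgradient `v` at `x⋆ + t • h` with a
subgradient `w` at `x⋆`. Monotonicity of the subdifferential gives `0 ≤ t ⟪v - w, h⟫`, and since
`h ∈ T` only the `T`-components of `v` and `w` enter, which are those of `∇R̃`. Hence
`t ↦ ⟪∇R̃(x⋆ + t • h) - ∇R̃(x⋆), h⟫` is nonnegative for small `t > 0`, and its derivative at
`t = 0`, namely `⟪∇²R̃(x⋆) h, h⟫`, is nonnegative.
-/

open Filter Topology

open scoped InnerProductSpace

theorem Submodule.inner_eq_of_orthogonalProjectionOnto_eq {𝕜 E : Type*} [RCLike 𝕜]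
    [NormedAddCommGroup E] [InnerProductSpace 𝕜 E] (K : Submodule 𝕜 E) [K.HasOrthogonalProjection]
    {u v w : E} (hu : u ∈ K) (h : K.orthogonalProjectionOnto v = K.orthogonalProjectionOnto w) :
    ⟪v, u⟫_𝕜 = ⟪w, u⟫_𝕜 := by
  simpa using congrArg (fun p : K => ⟪p, (⟨u, hu⟩ : K)⟫_𝕜) h

theorem HasFDerivAt.inner_apply_nonneg_of_eventually_inner_sub_nonneg {E : Type*}
    [NormedAddCommGroup E] [InnerProductSpace ℝ E] {F : E → E} {A : E →L[ℝ] E} {x h : E}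
    (hF : HasFDerivAt F A x)
    (hmono : ∀ᶠ t in 𝓝[>] (0 : ℝ), 0 ≤ ⟪F (x + t • h) - F x, h⟫_ℝ) :
    0 ≤ ⟪A h, h⟫_ℝ := by
  have hslope : Tendsto (slope (fun t : ℝ => F (x + t • h)) 0) (𝓝[>] 0) (𝓝 (A h)) :=
    (hasDerivAt_iff_tendsto_slope.mp (hF.hasLineDerivAt h)).mono_left
      (nhdsWithin_mono 0 fun _ ht => ne_of_gt ht)
  refine ge_of_tendsto (hslope.inner tendsto_const_nhds) ?_
  filter_upwards [hmono, self_mem_nhdsWithin] with t ht (htpos : 0 < t)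
  rw [slope_def_module, sub_zero, zero_smul, add_zero, real_inner_smul_left]
  exact mul_nonneg (inv_nonneg.mpr htpos.le) ht

section Subdifferential

variable {n : ℕ} {R : EuclideanSpace ℝ (Fin n) → EReal} {x y v w : EuclideanSpace ℝ (Fin n)}

theorem ne_top_of_mem_subdiff_s8 (hRtop : ∃ x, R x ≠ ⊤) (hv : v ∈ subdiff R x) : R x ≠ ⊤ := by
  intro htop
  obtain ⟨y, hy⟩ := hRtop
  have := hv y
  rw [htop, EReal.top_add_of_ne_bot (EReal.coe_ne_bot _)] at this
  exact hy (top_le_iff.mp this)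

theorem inner_sub_nonneg_of_mem_subdiff (hRbot : ∀ x, R x ≠ ⊥) (hRtop : ∃ x, R x ≠ ⊤)
    (hv : v ∈ subdiff R x) (hw : w ∈ subdiff R y) : 0 ≤ ⟪v - w, x - y⟫_ℝ := by
  have hx := hv y
  have hy := hw x
  rw [← EReal.coe_toReal (ne_top_of_mem_subdiff_s8 hRtop hv) (hRbot x),
    ← EReal.coe_toReal (ne_top_of_mem_subdiff_s8 hRtop hw) (hRbot y), ← EReal.coe_add,
    EReal.coe_le_coe_iff] at hx hy
  rw [← neg_sub x y, inner_neg_right] at hx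
  rw [inner_sub_left]
  linarith

end Subdifferential

theorem riemannian_hessian_psd_general {n : ℕ}
    (R : EuclideanSpace ℝ (Fin n) → EReal)
    -- R is proper, convex and lower semicontinuous
    (hRbot : ∀ x, R x ≠ ⊥) (hRtop : ∃ x, R x ≠ ⊤)
    -- the smooth representative R̃, its gradient and Hessian at x⋆
    (Rgrad : EuclideanSpace ℝ (Fin n) → EuclideanSpace ℝ (Fin n))
    (Rhess : EuclideanSpace ℝ (Fin n) →L[ℝ] EuclideanSpace ℝ (Fin n))
    (xstar : EuclideanSpace ℝ (Fin n))
    (T : Submodule ℝ (EuclideanSpace ℝ (Fin n)))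
    (hhess : HasFDerivAt Rgrad Rhess xstar)
    -- the projected subdifferential agrees with the projected gradient along x⋆ + T
    (ε : ℝ) (hε : 0 < ε)
    (hsub : ∀ h ∈ T, ‖h‖ < ε →
      (subdiff R (xstar + h)).Nonempty ∧
      ∀ v ∈ subdiff R (xstar + h),
        T.orthogonalProjectionOnto v = T.orthogonalProjectionOnto (Rgrad (xstar + h))) :
    ∀ h ∈ T, 0 ≤ (inner ℝ h (Rhess h) : ℝ) := by
  intro h hh
  have hsmall : ∀ᶠ t in 𝓝[>] (0 : ℝ), ‖t • h‖ < ε := by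
    refine nhdsWithin_le_nhds (((continuous_id.smul continuous_const :
      Continuous fun t : ℝ => t • h).tendsto 0).eventually
      (Metric.ball_mem_nhds _ hε) |>.mono fun t ht => ?_)
    simpa using ht
  obtain ⟨⟨w, hw⟩, hwproj⟩ := hsub 0 T.zero_mem (by simpa using hε)
  rw [add_zero] at hw hwproj
  rw [real_inner_comm]
  refine hhess.inner_apply_nonneg_of_eventually_inner_sub_nonneg ?_
  filter_upwards [hsmall, self_mem_nhdsWithin] with t hts (htpos : 0 < t)
  obtain ⟨⟨v, hv⟩, hvproj⟩ := hsub (t • h) (T.smul_mem t hh) hts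
  have hmono := inner_sub_nonneg_of_mem_subdiff hRbot hRtop hv hw
  rw [add_sub_cancel_left, real_inner_smul_right] at hmono
  rw [inner_sub_left, ← T.inner_eq_of_orthogonalProjectionOnto_eq hh (hvproj v hv),
    ← T.inner_eq_of_orthogonalProjectionOnto_eq hh (hwproj w hw), ← inner_sub_left]
  exact nonneg_of_mul_nonneg_right hmono htpos

/-- **Abstract form of Lemma 4.3(ii)**: if along the affine subspace `x⋆ + T` the
projection of the subdifferential of the convex function `R` agrees with the projection
of the gradient of a smooth representative `R̃`, then `P_T ∇²R̃(x⋆) P_T` is positive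
semidefinite. -/
theorem riemannian_hessian_psd {n : ℕ}
    (R : EuclideanSpace ℝ (Fin n) → EReal)
    -- R is proper, convex and lower semicontinuous
    (hRbot : ∀ x, R x ≠ ⊥) (hRtop : ∃ x, R x ≠ ⊤)
    (hRconv : ∀ x y : EuclideanSpace ℝ (Fin n), ∀ t : ℝ, 0 ≤ t → t ≤ 1 →
      R (t • x + (1 - t) • y) ≤ (t : EReal) * R x + ((1 - t : ℝ) : EReal) * R y)
    (hRlsc : LowerSemicontinuous R)
    -- the smooth representative R̃, its gradient and Hessian at x⋆
    (Rt : EuclideanSpace ℝ (Fin n) → ℝ)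
    (Rgrad : EuclideanSpace ℝ (Fin n) → EuclideanSpace ℝ (Fin n))
    (Rhess : EuclideanSpace ℝ (Fin n) →L[ℝ] EuclideanSpace ℝ (Fin n))
    (xstar : EuclideanSpace ℝ (Fin n))
    (T : Submodule ℝ (EuclideanSpace ℝ (Fin n)))
    -- R̃ is twice continuously differentiable on a neighborhood of x⋆
    (hC2 : ∃ U ∈ 𝓝 xstar, ContDiffOn ℝ 2 Rt U)
    (hgrad : ∀ᶠ z in 𝓝 xstar, HasGradientAt Rt (Rgrad z) z)
    (hhess : HasFDerivAt Rgrad Rhess xstar)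
    -- the projected subdifferential agrees with the projected gradient along x⋆ + T
    (ε : ℝ) (hε : 0 < ε)
    (hsub : ∀ h ∈ T, ‖h‖ < ε →
      (subdiff R (xstar + h)).Nonempty ∧
      ∀ v ∈ subdiff R (xstar + h),
        T.orthogonalProjectionOnto v = T.orthogonalProjectionOnto (Rgrad (xstar + h))) :
    ∀ h ∈ T, 0 ≤ (inner ℝ h (Rhess h) : ℝ) :=
  riemannian_hessian_psd_general R hRbot hRtop Rgrad Rhess xstar T hhess ε hε hsub
end

section
/- Let U and G be real symmetric n×n matrices with U positive semidefinite, and set W = (Id + U)⁻¹. If every eigenvalue of G lies in the open interval (−1, 1), then every complex eigenvalue of the matrix WG is real and lies in (−1, 1). If moreover G is positive semidefinite, then every eigenvalue of WG lies in [0, 1). (Lemma 4.4(ii).) -/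
/-!
If `(Id + U)⁻¹ G v = σ v` with `v ≠ 0`, then `G v = σ (Id + U) v`, so `σ` is the generalized
Rayleigh quotient `v* G v / v* (Id + U) v` of two Hermitian forms, hence real. The spectral
hypothesis makes `Id - G` and `Id + G` positive definite, so `|v* G v| < v* v ≤ v* (Id + U) v`.
-/

open Matrix
open scoped ComplexOrder MatrixOrder

namespace Matrix

variable {n : Type*} [Fintype n] {𝕜 : Type*} [RCLike 𝕜]

theorem exists_mulVec_eq_smul_of_mem_spectrum {K : Type*} [Field K] [DecidableEq n]
    {M : Matrix n n K} {σ : K} (hσ : σ ∈ spectrum K M) : ∃ v ≠ 0, M *ᵥ v = σ • v := by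
  rw [← spectrum_toLin', ← Module.End.hasEigenvalue_iff_mem_spectrum] at hσ
  obtain ⟨v, hv⟩ := hσ.exists_hasEigenvector
  exact ⟨v, hv.2, by simpa using hv.apply_eq_smul⟩

theorem IsHermitian.coe_re_star_dotProduct_mulVec_self {A : Matrix n n 𝕜} (hA : A.IsHermitian)
    (x : n → 𝕜) : (RCLike.re (star x ⬝ᵥ A *ᵥ x) : 𝕜) = star x ⬝ᵥ A *ᵥ x :=
  RCLike.conj_eq_iff_re.mp (RCLike.conj_eq_iff_im.mpr (hA.im_star_dotProduct_mulVec_self x))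

theorem IsHermitian.eq_ofReal_div_of_mulVec_eq_smul_mulVec {A B : Matrix n n 𝕜}
    (hA : A.IsHermitian) (hB : B.PosDef) {v : n → 𝕜} (hv : v ≠ 0) {σ : 𝕜}
    (h : A *ᵥ v = σ • B *ᵥ v) :
    σ = ((RCLike.re (star v ⬝ᵥ A *ᵥ v) / RCLike.re (star v ⬝ᵥ B *ᵥ v) : ℝ) : 𝕜) := by
  rw [RCLike.ofReal_div, hA.coe_re_star_dotProduct_mulVec_self,
    hB.isHermitian.coe_re_star_dotProduct_mulVec_self, eq_div_iff (hB.dotProduct_mulVec_pos hv).ne',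
    h, dotProduct_smul, smul_eq_mul]

theorem PosSemidef.map_algebraMap {A : Matrix n n ℝ} (hA : A.PosSemidef) :
    (A.map (algebraMap ℝ 𝕜)).PosSemidef := by
  classical
  obtain ⟨B, rfl⟩ : ∃ B : Matrix n n ℝ, A = Bᴴ * B :=
    ⟨CFC.sqrt A, by
      rw [(CFC.sqrt_nonneg A).posSemidef.isHermitian.eq, CFC.sqrt_mul_sqrt_self A hA.nonneg]⟩
  rw [Matrix.map_mul, conjTranspose_map _ algebraMap_star_comm]
  exact posSemidef_conjTranspose_mul_self _

theorem PosDef.map_algebraMap [DecidableEq n] {A : Matrix n n ℝ} (hA : A.PosDef) :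
    (A.map (algebraMap ℝ 𝕜)).PosDef :=
  hA.posSemidef.map_algebraMap.posDef_iff_isUnit.mpr (hA.isUnit.map (algebraMap ℝ 𝕜).mapMatrix)

theorem IsHermitian.posDef_of_forall_spectrum_pos [DecidableEq n] {A : Matrix n n 𝕜}
    (hA : A.IsHermitian) (h : ∀ μ ∈ spectrum ℝ A, 0 < μ) : A.PosDef :=
  ((StarOrderedRing.isStrictlyPositive_iff_spectrum_pos A hA.isSelfAdjoint).mpr h).posDef

theorem IsHermitian.posDef_one_sub [DecidableEq n] {A : Matrix n n 𝕜}
    (hA : A.IsHermitian) (h : ∀ μ ∈ spectrum ℝ A, μ < 1) : (1 - A).PosDef := by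
  refine (isHermitian_one.sub hA).posDef_of_forall_spectrum_pos fun μ hμ => ?_
  rw [← map_one (algebraMap ℝ (Matrix n n 𝕜)), ← spectrum.singleton_sub_eq] at hμ
  obtain ⟨_, rfl, ν, hν, rfl⟩ := hμ
  linarith [h ν hν]

theorem IsHermitian.posDef_one_add [DecidableEq n] {A : Matrix n n 𝕜}
    (hA : A.IsHermitian) (h : ∀ μ ∈ spectrum ℝ A, -1 < μ) : (1 + A).PosDef := by
  refine (isHermitian_one.add hA).posDef_of_forall_spectrum_pos fun μ hμ => ?_
  rw [← map_one (algebraMap ℝ (Matrix n n 𝕜)), ← spectrum.singleton_add_eq] at hμ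
  obtain ⟨_, rfl, ν, hν, rfl⟩ := hμ
  linarith [h ν hν]

theorem IsHermitian.exists_eq_ofReal_div_of_mem_spectrum_inv_mul [DecidableEq n]
    {A B : Matrix n n ℝ} (hA : A.IsHermitian) (hB : B.PosDef) {σ : 𝕜}
    (hσ : σ ∈ spectrum 𝕜 ((B⁻¹ * A).map (algebraMap ℝ 𝕜))) :
    ∃ v ≠ 0, σ = ((RCLike.re (star v ⬝ᵥ A.map (algebraMap ℝ 𝕜) *ᵥ v) /
      RCLike.re (star v ⬝ᵥ B.map (algebraMap ℝ 𝕜) *ᵥ v) : ℝ) : 𝕜) := by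
  obtain ⟨v, hv, hσv⟩ := exists_mulVec_eq_smul_of_mem_spectrum hσ
  refine ⟨v, hv, (hA.map _ algebraMap_star_comm).eq_ofReal_div_of_mulVec_eq_smul_mulVec
    hB.map_algebraMap hv ?_⟩
  rw [← mul_nonsing_inv_cancel_left B A ((isUnit_iff_isUnit_det B).mp hB.isUnit), Matrix.map_mul,
    ← mulVec_mulVec, hσv, mulVec_smul]

theorem re_dotProduct_mulVec_div_mem_Ioo [DecidableEq n] {A U : Matrix n n 𝕜}
    (hA₁ : (1 - A).PosDef) (hA₂ : (1 + A).PosDef) (hU : U.PosSemidef) {v : n → 𝕜} (hv : v ≠ 0) :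
    RCLike.re (star v ⬝ᵥ A *ᵥ v) / RCLike.re (star v ⬝ᵥ (1 + U) *ᵥ v) ∈ Set.Ioo (-1) 1 := by
  have h₁ := hA₁.re_dotProduct_pos hv
  have h₂ := hA₂.re_dotProduct_pos hv
  have hq := (PosDef.one.add_posSemidef hU).re_dotProduct_pos hv
  have hUv := hU.re_dotProduct_nonneg v
  simp only [sub_mulVec, add_mulVec, one_mulVec, dotProduct_sub, dotProduct_add, map_sub,
    map_add] at h₁ h₂ hq ⊢
  rw [Set.mem_Ioo, lt_div_iff₀ hq, div_lt_one hq]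
  constructor <;> linarith

end Matrix

/-- **Lemma 4.4(ii)**: for `U` symmetric positive semidefinite and `G` real symmetric with
eigenvalues in `(−1, 1)`, the matrix `WG` with `W = (Id + U)⁻¹` has only real eigenvalues,
lying in `(−1, 1)`; if moreover `G` is positive semidefinite, they lie in `[0, 1)`. -/
theorem eigenvalues_of_WG {n : ℕ} (U G : Matrix (Fin n) (Fin n) ℝ)
    (hU : U.PosSemidef) (hG : G.IsHermitian)
    (hGspec : ∀ μ ∈ spectrum ℝ G, μ ∈ Set.Ioo (-1 : ℝ) 1) :
    (∀ σ ∈ spectrum ℂ (((1 + U)⁻¹ * G).map (algebraMap ℝ ℂ)),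
      σ.im = 0 ∧ σ.re ∈ Set.Ioo (-1 : ℝ) 1) ∧
    (G.PosSemidef →
      ∀ σ ∈ spectrum ℂ (((1 + U)⁻¹ * G).map (algebraMap ℝ ℂ)),
        σ.im = 0 ∧ σ.re ∈ Set.Ico (0 : ℝ) 1) := by
  set Gc := G.map (algebraMap ℝ ℂ)
  set Uc := U.map (algebraMap ℝ ℂ)
  have hUc : Uc.PosSemidef := hU.map_algebraMap
  have hGc₁ : (1 - Gc).PosDef := by
    simpa [Gc, Matrix.map_sub, Matrix.map_one] using
      (hG.posDef_one_sub fun μ hμ => (hGspec μ hμ).2).map_algebraMap (𝕜 := ℂ)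
  have hGc₂ : (1 + Gc).PosDef := by
    simpa [Gc, Matrix.map_add, Matrix.map_one] using
      (hG.posDef_one_add fun μ hμ => (hGspec μ hμ).1).map_algebraMap (𝕜 := ℂ)
  have hmap_one_add : (1 + U).map (algebraMap ℝ ℂ) = 1 + Uc := by
    simp [Uc, Matrix.map_add, Matrix.map_one]
  have hW : (1 + U).PosDef := PosDef.one.add_posSemidef hU
  refine ⟨fun σ hσ => ?_, fun hG₀ σ hσ => ?_⟩ <;>
    obtain ⟨v, hv, rfl⟩ := hG.exists_eq_ofReal_div_of_mem_spectrum_inv_mul hW hσ <;>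
    rw [hmap_one_add]
  · exact ⟨Complex.ofReal_im _, re_dotProduct_mulVec_div_mem_Ioo hGc₁ hGc₂ hUc hv⟩
  · exact ⟨Complex.ofReal_im _,
      div_nonneg (hG₀.map_algebraMap.re_dotProduct_nonneg v)
        ((PosDef.one.add_posSemidef hUc).re_dotProduct_pos hv).le,
      (re_dotProduct_mulVec_div_mem_Ioo hGc₁ hGc₂ hUc hv).2⟩
end

section
/- Let G be a real symmetric n×n matrix, let a, b ∈ ℝ, and let M be the 2n×2n block matrix M = [[(a−b)·Id + (1+b)·G, −(a−b)·Id − b·G], [Id, 0]]. Then: (1) every eigenvector (r₁, r₂) of M over ℂ with eigenvalue σ satisfies r₁ = σ·r₂; (2) the spectrum of M over ℂ is exactly the set of complex roots σ of the quadratic σ² − ((a−b) + (1+b)η)·σ + (a−b) + b·η = 0 as η ranges over the eigenvalues of G. (Proposition 4.7(i).) -/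
/-!
The block matrix `[[A, B], [1, 0]]` linearises the quadratic eigenvalue problem
`(σ² - σA - B) r = 0`: its eigenvectors are exactly the vectors `(σ r, r)` with `r ≠ 0` solving it.
For `A = α + βG` and `B = -(γ + δG)` this problem reads `(βσ - δ) G r = (σ² - ασ + γ) r`. When
`βσ ≠ δ`, `r` is an eigenvector of `G` with eigenvalue `η = (σ² - ασ + γ) / (βσ - δ)`; when
`βσ = δ`, also `σ² - ασ + γ = 0`, and then any eigenvalue `η` of `G` (one exists over `ℂ`) fits.
-/

open Matrix

section Spectrum

variable {n K : Type*} [Fintype n] [DecidableEq n] [Field K]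

theorem Matrix.mem_spectrum_iff_exists_mulVec_eq_smul (A : Matrix n n K) (μ : K) :
    μ ∈ spectrum K A ↔ ∃ v ≠ 0, A *ᵥ v = μ • v := by
  rw [← spectrum_toLin', ← Module.End.hasEigenvalue_iff_mem_spectrum,
    Module.End.hasEigenvalue_iff, Submodule.ne_bot_iff]
  simp only [Module.End.mem_eigenspace_iff, toLin'_apply, and_comm]

theorem Matrix.exists_smul_mulVec_eq_smul_iff [IsAlgClosed K] (G : Matrix n n K) (c d : K) :
    (∃ r ≠ 0, c • (G *ᵥ r) = d • r) ↔ ∃ η ∈ spectrum K G, d = c * η := by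
  constructor
  · rintro ⟨r, hr, h⟩
    by_cases hc : c = 0
    · have hd : d = 0 := by
        rw [hc, zero_smul, eq_comm, smul_eq_zero] at h
        exact h.resolve_right hr
      obtain ⟨i, -⟩ := Function.ne_iff.mp hr
      have : Nonempty n := ⟨i⟩
      obtain ⟨η, hη⟩ := spectrum.nonempty_of_isAlgClosed_of_finiteDimensional K G
      exact ⟨η, hη, by rw [hc, hd, zero_mul]⟩
    · refine ⟨d / c, (G.mem_spectrum_iff_exists_mulVec_eq_smul _).mpr ⟨r, hr, ?_⟩, ?_⟩
      · rw [div_eq_inv_mul, mul_smul, ← h, smul_smul, inv_mul_cancel₀ hc, one_smul]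
      · field_simp
  · rintro ⟨η, hη, rfl⟩
    obtain ⟨r, hr, h⟩ := (G.mem_spectrum_iff_exists_mulVec_eq_smul η).mp hη
    exact ⟨r, hr, by rw [h, smul_smul]⟩

theorem Matrix.affine_quadratic_eigen_iff (G : Matrix n n K) (α β γ δ σ : K) (r : n → K) :
    σ • ((α • 1 + β • G) *ᵥ r) + (-(γ • 1) - δ • G) *ᵥ r = σ ^ 2 • r ↔
      (β * σ - δ) • (G *ᵥ r) = (σ ^ 2 - α * σ + γ) • r := by
  simp only [add_mulVec, sub_mulVec, neg_mulVec, smul_mulVec, one_mulVec, funext_iff,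
    Pi.add_apply, Pi.sub_apply, Pi.neg_apply, Pi.smul_apply, smul_eq_mul]
  exact forall_congr' fun i => ⟨fun h => by linear_combination h, fun h => by linear_combination h⟩

end Spectrum

section Companion

variable {m R : Type*} [Fintype m] [DecidableEq m]

theorem Matrix.apply_inl_eq_mul_apply_inr_of_fromBlocks_one_zero_mulVec_eq_smul [Semiring R]
    {A B : Matrix m m R} {σ : R} {v : m ⊕ m → R} (h : fromBlocks A B 1 0 *ᵥ v = σ • v) (i : m) :
    v (Sum.inl i) = σ * v (Sum.inr i) := by
  simpa [fromBlocks_mulVec] using congrFun h (Sum.inr i)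

theorem Matrix.fromBlocks_one_zero_mulVec_elim [CommSemiring R] (A B : Matrix m m R) (σ : R)
    (r : m → R) :
    fromBlocks A B 1 0 *ᵥ Sum.elim (σ • r) r = Sum.elim (σ • (A *ᵥ r) + B *ᵥ r) (σ • r) := by
  simp [fromBlocks_mulVec, mulVec_smul]

theorem Matrix.mem_spectrum_fromBlocks_one_zero_iff {K : Type*} [Field K] (A B : Matrix m m K)
    (σ : K) :
    σ ∈ spectrum K (fromBlocks A B (1 : Matrix m m K) 0) ↔
      ∃ r ≠ 0, σ • (A *ᵥ r) + B *ᵥ r = σ ^ 2 • r := by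
  rw [mem_spectrum_iff_exists_mulVec_eq_smul]
  constructor
  · rintro ⟨v, hv, h⟩
    have hv_eq : v = Sum.elim (σ • (v ∘ Sum.inr)) (v ∘ Sum.inr) := by
      ext (i | i)
      · exact apply_inl_eq_mul_apply_inr_of_fromBlocks_one_zero_mulVec_eq_smul h i
      · rfl
    refine ⟨v ∘ Sum.inr, fun h0 => hv ?_, ?_⟩
    · rw [hv_eq, h0, smul_zero, Sum.elim_zero_zero]
    · rw [hv_eq, fromBlocks_one_zero_mulVec_elim] at h
      ext i
      simpa [pow_two, mul_assoc] using congrFun h (Sum.inl i)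
  · rintro ⟨r, hr, h⟩
    refine ⟨Sum.elim (σ • r) r, fun h0 => hr (by simpa using congrArg (· ∘ Sum.inr) h0), ?_⟩
    rw [fromBlocks_one_zero_mulVec_elim, h]
    ext (i | i) <;> simp [pow_two, mul_assoc]

end Companion

theorem block_matrix_spectrum_general {n : ℕ} (G : Matrix (Fin n) (Fin n) ℝ)
    (a b : ℝ)
    (M : Matrix (Fin n ⊕ Fin n) (Fin n ⊕ Fin n) ℝ)
    (hM : M = Matrix.fromBlocks
      ((a - b) • (1 : Matrix (Fin n) (Fin n) ℝ) + (1 + b) • G)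
      (-((a - b) • (1 : Matrix (Fin n) (Fin n) ℝ)) - b • G)
      1 0) :
    (∀ (σ : ℂ) (v : Fin n ⊕ Fin n → ℂ), v ≠ 0 →
      (M.map (algebraMap ℝ ℂ)).mulVec v = σ • v →
      ∀ i, v (Sum.inl i) = σ * v (Sum.inr i)) ∧
    spectrum ℂ (M.map (algebraMap ℝ ℂ)) =
      {σ : ℂ | ∃ η ∈ spectrum ℂ (G.map (algebraMap ℝ ℂ)),
        σ ^ 2 - (((a : ℂ) - (b : ℂ)) + (1 + (b : ℂ)) * η) * σ
          + (((a : ℂ) - (b : ℂ)) + (b : ℂ) * η) = 0} := by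
  set Gc := G.map (algebraMap ℝ ℂ)
  have hMc : M.map (algebraMap ℝ ℂ) = fromBlocks
      (((a : ℂ) - b) • 1 + (1 + (b : ℂ)) • Gc) (-(((a : ℂ) - b) • 1) - (b : ℂ) • Gc) 1 0 := by
    subst hM
    ext (i | i) (j | j) <;> simp [Gc, one_apply, apply_ite]
  rw [hMc]
  refine ⟨fun σ v _ h => apply_inl_eq_mul_apply_inr_of_fromBlocks_one_zero_mulVec_eq_smul h, ?_⟩
  ext σ
  simp only [mem_spectrum_fromBlocks_one_zero_iff, affine_quadratic_eigen_iff,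
    exists_smul_mulVec_eq_smul_iff]
  refine exists_congr fun η => and_congr_right fun _ => ?_
  constructor <;> intro h <;> linear_combination h

/-- **Proposition 4.7(i)**: for the block matrix
`M = [[(a−b)·Id + (1+b)·G, −(a−b)·Id − b·G], [Id, 0]]`, every eigenvector `(r₁, r₂)` of `M`
with eigenvalue `σ` satisfies `r₁ = σ·r₂`, and the complex spectrum of `M` is exactly the
set of roots of `σ² − ((a−b) + (1+b)η)σ + (a−b) + bη = 0` as `η` runs over the eigenvalues
of `G`. -/
theorem block_matrix_spectrum {n : ℕ} (G : Matrix (Fin n) (Fin n) ℝ)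
    (hG : G.IsHermitian) (a b : ℝ)
    (M : Matrix (Fin n ⊕ Fin n) (Fin n ⊕ Fin n) ℝ)
    (hM : M = Matrix.fromBlocks
      ((a - b) • (1 : Matrix (Fin n) (Fin n) ℝ) + (1 + b) • G)
      (-((a - b) • (1 : Matrix (Fin n) (Fin n) ℝ)) - b • G)
      1 0) :
    (∀ (σ : ℂ) (v : Fin n ⊕ Fin n → ℂ), v ≠ 0 →
      (M.map (algebraMap ℝ ℂ)).mulVec v = σ • v →
      ∀ i, v (Sum.inl i) = σ * v (Sum.inr i)) ∧
    spectrum ℂ (M.map (algebraMap ℝ ℂ)) =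
      {σ : ℂ | ∃ η ∈ spectrum ℂ (G.map (algebraMap ℝ ℂ)),
        σ ^ 2 - (((a : ℂ) - (b : ℂ)) + (1 + (b : ℂ)) * η) * σ
          + (((a : ℂ) - (b : ℂ)) + (b : ℂ) * η) = 0} :=
  block_matrix_spectrum_general G a b M hM
end

section
/- Let M be a real m×m matrix with spectral radius ρ(M) < 1, and let (d_k) be a sequence in ℝ^m such that for every ε > 0 there exists K₀ with ‖d_{k+1} − M·d_k‖ ≤ ε‖d_k‖ for all k ≥ K₀ (i.e., d_{k+1} = M·d_k + o(‖d_k‖)). Then for every ρ ∈ (ρ(M), 1) there exist K ∈ ℕ and C > 0 such that ‖d_k‖ ≤ C·ρ^{k−K}·‖d_K‖ for all k ≥ K. (Linearization-to-linear-rate principle underlying Theorems 4.11 and 4.13.) -/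
/-!
Fix `ρ(M) < s < ρ`. By Gelfand's formula for the complexified matrix, whose operator norm
dominates that of `M`, `‖Mⁿ‖ ≤ sⁿ` for some `n ≥ 1`, so the adapted norm
`N x = ∑_{j<n} ‖Mʲ x‖ / sʲ` is equivalent to `‖·‖` and satisfies `N (M x) ≤ s N x`. For `k`
large the perturbation `d_{k+1} - M d_k` has `N`-size at most `(ρ - s) N (d_k)`, hence
`N (d_{k+1}) ≤ ρ N (d_k)`, and the rate transfers back to `‖·‖` up to the equivalence constant.
-/

open Filter Matrix

theorem spectrum.eventually_norm_pow_lt_pow {A : Type*} [NormedRing A] [NormedAlgebra ℂ A]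
    [CompleteSpace A] {a : A} {s : ℝ} (h : spectralRadius ℂ a < ENNReal.ofReal s) :
    ∀ᶠ n in atTop, ‖a ^ n‖ < s ^ n := by
  filter_upwards [(pow_norm_pow_one_div_tendsto_nhds_spectralRadius a).eventually_lt_const h,
    eventually_ne_atTop 0] with n hn hn0
  obtain ⟨hlt, -⟩ := ENNReal.ofReal_lt_ofReal_iff'.mp hn
  calc ‖a ^ n‖ = (‖a ^ n‖ ^ (1 / n : ℝ)) ^ n := by
        rw [one_div, Real.rpow_inv_natCast_pow (norm_nonneg _) hn0]
    _ < s ^ n := pow_lt_pow_left₀ hlt (by positivity) hn0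

section Complexification

variable {ι : Type*} [Fintype ι]

theorem EuclideanSpace.norm_ofReal (x : EuclideanSpace ℝ ι) :
    ‖(WithLp.toLp 2 fun i => (x i : ℂ) : EuclideanSpace ℂ ι)‖ = ‖x‖ := by
  simp [EuclideanSpace.norm_eq]

theorem Matrix.toEuclideanCLM_map_ofReal_apply [DecidableEq ι] (A : Matrix ι ι ℝ)
    (x : EuclideanSpace ℝ ι) :
    toEuclideanCLM (𝕜 := ℂ) (A.map (algebraMap ℝ ℂ)) (WithLp.toLp 2 fun i => (x i : ℂ)) =
      WithLp.toLp 2 fun i => (toEuclideanCLM (𝕜 := ℝ) A x i : ℂ) := by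
  ext i
  simp [toEuclideanCLM_toLp, mulVec, dotProduct]

theorem Matrix.norm_toEuclideanCLM_le_map_ofReal [DecidableEq ι] (A : Matrix ι ι ℝ) :
    ‖toEuclideanCLM (𝕜 := ℝ) A‖ ≤ ‖toEuclideanCLM (𝕜 := ℂ) (A.map (algebraMap ℝ ℂ))‖ := by
  refine ContinuousLinearMap.opNorm_le_bound _ (norm_nonneg _) fun x => ?_
  rw [← EuclideanSpace.norm_ofReal, ← toEuclideanCLM_map_ofReal_apply,
    ← EuclideanSpace.norm_ofReal x]
  exact ContinuousLinearMap.le_opNorm _ _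

theorem Matrix.eventually_norm_toEuclideanCLM_pow_lt_pow [DecidableEq ι] (M : Matrix ι ι ℝ)
    {s : ℝ} (h : spectralRadius ℂ (M.map (algebraMap ℝ ℂ)) < ENNReal.ofReal s) :
    ∀ᶠ n in atTop, ‖toEuclideanCLM (𝕜 := ℝ) M ^ n‖ < s ^ n := by
  have hT : spectralRadius ℂ (toEuclideanCLM (𝕜 := ℂ) (M.map (algebraMap ℝ ℂ))) <
      ENNReal.ofReal s := by
    rwa [spectralRadius, AlgEquiv.spectrum_eq]
  filter_upwards [spectrum.eventually_norm_pow_lt_pow hT] with n hn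
  calc ‖toEuclideanCLM (𝕜 := ℝ) M ^ n‖ = ‖toEuclideanCLM (𝕜 := ℝ) (M ^ n)‖ := by rw [map_pow]
    _ ≤ ‖toEuclideanCLM (𝕜 := ℂ) ((M ^ n).map (algebraMap ℝ ℂ))‖ :=
      norm_toEuclideanCLM_le_map_ofReal _
    _ < s ^ n := by rwa [Matrix.map_pow, map_pow]

end Complexification

section AdaptedNorm

variable {𝕜 E : Type*} [NontriviallyNormedField 𝕜] [SeminormedAddCommGroup E] [NormedSpace 𝕜 E]
  (L : E →L[𝕜] E) (n : ℕ)

noncomputable def adaptedNorm (s : ℝ) (x : E) : ℝ :=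
  ∑ j ∈ Finset.range n, ‖(L ^ j) x‖ / s ^ j

variable {L n} {s : ℝ}

theorem norm_le_adaptedNorm (hs : 0 ≤ s) (hn : n ≠ 0) (x : E) : ‖x‖ ≤ adaptedNorm L n s x := by
  have h0 : 0 ∈ Finset.range n := Finset.mem_range.mpr (Nat.pos_of_ne_zero hn)
  calc ‖x‖ = ‖(L ^ 0) x‖ / s ^ 0 := by simp
    _ ≤ adaptedNorm L n s x :=
      Finset.single_le_sum (f := fun j => ‖(L ^ j) x‖ / s ^ j) (fun j _ => by positivity) h0

theorem adaptedNorm_add_le (hs : 0 ≤ s) (x y : E) :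
    adaptedNorm L n s (x + y) ≤ adaptedNorm L n s x + adaptedNorm L n s y := by
  rw [adaptedNorm, adaptedNorm, adaptedNorm, ← Finset.sum_add_distrib]
  gcongr with j
  rw [← add_div, map_add]
  gcongr
  exact norm_add_le _ _

variable (L n) in
theorem exists_adaptedNorm_le (hs : 0 ≤ s) : ∃ c > 0, ∀ x, adaptedNorm L n s x ≤ c * ‖x‖ := by
  refine ⟨∑ j ∈ Finset.range n, ‖L ^ j‖ / s ^ j + 1, by positivity, fun x => ?_⟩
  calc adaptedNorm L n s x ≤ ∑ j ∈ Finset.range n, ‖L ^ j‖ / s ^ j * ‖x‖ := by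
        refine Finset.sum_le_sum fun j _ => ?_
        rw [div_mul_eq_mul_div]
        gcongr
        exact (L ^ j).le_opNorm x
    _ ≤ _ := by rw [← Finset.sum_mul]; gcongr; linarith

/-- The step that makes `adaptedNorm` contract: shifting the sum by one index trades the
leading term `‖x‖` for the trailing term `‖Lⁿ x‖ / sⁿ ≤ ‖x‖`. -/
theorem adaptedNorm_apply_le (hs : 0 < s) {x : E} (hx : ‖(L ^ n) x‖ ≤ s ^ n * ‖x‖) :
    adaptedNorm L n s (L x) ≤ s * adaptedNorm L n s x := by
  set f : ℕ → ℝ := fun j => ‖(L ^ j) x‖ / s ^ j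
  have hshift : adaptedNorm L n s (L x) = s * ∑ j ∈ Finset.range n, f (j + 1) := by
    rw [adaptedNorm, Finset.mul_sum]
    refine Finset.sum_congr rfl fun j _ => ?_
    simp only [f, pow_succ L, pow_succ s]
    field_simp
    rfl
  have htail : f n ≤ f 0 := by
    simpa [f, div_le_iff₀ (pow_pos hs n), mul_comm] using hx
  have hsplit := (Finset.sum_range_succ' f n).symm.trans (Finset.sum_range_succ f n)
  rw [hshift]
  gcongr
  change _ ≤ ∑ j ∈ Finset.range n, f j
  linarith

end AdaptedNorm

theorem ContinuousLinearMap.exists_norm_le_mul_pow_of_linearization {𝕜 E : Type*}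
    [NontriviallyNormedField 𝕜] [SeminormedAddCommGroup E] [NormedSpace 𝕜 E] {L : E →L[𝕜] E}
    {s ρ : ℝ} {n : ℕ} (hs : 0 < s) (hsρ : s < ρ) (hn : n ≠ 0) (hLn : ‖L ^ n‖ ≤ s ^ n)
    {d : ℕ → E} (hlin : ∀ ε : ℝ, 0 < ε → ∃ K₀ : ℕ, ∀ k ≥ K₀, ‖d (k + 1) - L (d k)‖ ≤ ε * ‖d k‖) :
    ∃ (K : ℕ) (C : ℝ), 0 < C ∧ ∀ k ≥ K, ‖d k‖ ≤ C * ρ ^ (k - K) * ‖d K‖ := by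
  obtain ⟨c, hc, hNc⟩ := exists_adaptedNorm_le L n hs.le
  set N := adaptedNorm L n s
  obtain ⟨K, hK⟩ := hlin ((ρ - s) / c) (div_pos (sub_pos.mpr hsρ) hc)
  have hstep : ∀ k ≥ K, N (d (k + 1)) ≤ ρ * N (d k) := fun k hk => calc
    N (d (k + 1)) = N (L (d k) + (d (k + 1) - L (d k))) := by rw [add_sub_cancel]
    _ ≤ s * N (d k) + c * ‖d (k + 1) - L (d k)‖ :=
      (adaptedNorm_add_le hs.le _ _).trans <| add_le_add
        (adaptedNorm_apply_le hs ((L ^ n).le_of_opNorm_le hLn _)) (hNc _)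
    _ ≤ s * N (d k) + (ρ - s) * ‖d k‖ := by
      grw [hK k hk]
      rw [← mul_assoc, mul_div_cancel₀ _ hc.ne']
    _ ≤ s * N (d k) + (ρ - s) * N (d k) := by
      grw [norm_le_adaptedNorm (L := L) hs.le hn (d k)]
      linarith
    _ = ρ * N (d k) := by ring
  refine ⟨K, c, hc, fun k hk => ?_⟩
  obtain ⟨i, rfl⟩ := Nat.exists_eq_add_of_le hk
  have hgeom : N (d (K + i)) ≤ ρ ^ i * N (d K) :=
    le_geom (u := fun i => N (d (K + i))) (hs.trans hsρ).le i fun j _ => hstep (K + j) le_self_add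
  calc ‖d (K + i)‖ ≤ N (d (K + i)) := norm_le_adaptedNorm hs.le hn _
    _ ≤ ρ ^ i * (c * ‖d K‖) := by grw [hgeom, hNc]; exact pow_nonneg (hs.trans hsρ).le i
    _ = c * ρ ^ (K + i - K) * ‖d K‖ := by rw [Nat.add_sub_cancel_left]; ring

theorem linear_rate_of_linearization_general {m : ℕ} (M : Matrix (Fin m) (Fin m) ℝ)
    (d : ℕ → EuclideanSpace ℝ (Fin m))
    (hlin : ∀ ε : ℝ, 0 < ε → ∃ K₀ : ℕ, ∀ k ≥ K₀,
      ‖d (k + 1) - Matrix.toEuclideanLin M (d k)‖ ≤ ε * ‖d k‖) :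
    ∀ ρ : ℝ, spectralRadius ℂ (M.map (algebraMap ℝ ℂ)) < ENNReal.ofReal ρ → ρ < 1 →
      ∃ (K : ℕ) (C : ℝ), 0 < C ∧ ∀ k ≥ K, ‖d k‖ ≤ C * ρ ^ (k - K) * ‖d K‖ := by
  intro ρ hρ _
  obtain ⟨t, hMt, htρ⟩ := exists_between hρ
  have ht : t ≠ ⊤ := htρ.ne_top
  obtain ⟨n, hn, hn0⟩ := ((M.eventually_norm_toEuclideanCLM_pow_lt_pow
    (s := t.toReal) (by rwa [ENNReal.ofReal_toReal ht])).and (eventually_ne_atTop 0)).exists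
  exact ContinuousLinearMap.exists_norm_le_mul_pow_of_linearization
    (ENNReal.toReal_pos (pos_of_gt hMt).ne' ht) (ENNReal.toReal_lt_of_lt_ofReal htρ) hn0 hn.le hlin

/-- **Linearization-to-linear-rate principle** underlying Theorems 4.11 and 4.13: if
`ρ(M) < 1` and `d_{k+1} = M d_k + o(‖d_k‖)`, then for every `ρ ∈ (ρ(M), 1)` the sequence
`(d_k)` eventually decays linearly at rate `ρ`. -/
theorem linear_rate_of_linearization {m : ℕ} (M : Matrix (Fin m) (Fin m) ℝ)
    (hρM : spectralRadius ℂ (M.map (algebraMap ℝ ℂ)) < 1)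
    (d : ℕ → EuclideanSpace ℝ (Fin m))
    (hlin : ∀ ε : ℝ, 0 < ε → ∃ K₀ : ℕ, ∀ k ≥ K₀,
      ‖d (k + 1) - Matrix.toEuclideanLin M (d k)‖ ≤ ε * ‖d k‖) :
    ∀ ρ : ℝ, spectralRadius ℂ (M.map (algebraMap ℝ ℂ)) < ENNReal.ofReal ρ → ρ < 1 →
      ∃ (K : ℕ) (C : ℝ), 0 < C ∧ ∀ k ≥ K, ‖d k‖ ≤ C * ρ ^ (k - K) * ‖d K‖ :=
  linear_rate_of_linearization_general M d hlin
end

section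
/- Fix η ∈ (0, 1). For a ∈ [0, 1], let r(a) denote the maximum modulus of the complex roots of the quadratic σ² − (1+a)·η·σ + a·η = 0. Then r attains its minimum over [0, 1] uniquely at a⋆ = (1 − √(1−η))²/η, and the minimum value is r(a⋆) = 1 − √(1−η). (Optimal inertial parameter and optimal local rate, equations (4.13)–(4.14).) -/
/-!
With `s = √(1 - η)`, so that `η = (1 - s)(1 + s)`, the characteristic polynomial
`p(σ) = σ² - (1 + a)ησ + aη` satisfies `p(1 - s) = s (aη - (1 - s)²)`, and at `a⋆` it is the
perfect square `(σ - (1 - s))²`. For `a < a⋆` the value `p(1 - s)` is negative, so the larger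
real root exceeds `1 - s`. For `a > a⋆` the product `aη` of the two roots exceeds `(1 - s)²`,
so one of them has modulus greater than `1 - s`.
-/

theorem exists_root_sq_norm_ge {K : Type*} [NormedField K] [IsAlgClosed K] [NeZero (2 : K)]
    (b c : K) : ∃ z : K, z ^ 2 - b * z + c = 0 ∧ ‖c‖ ≤ ‖z‖ ^ 2 := by
  obtain ⟨z, hz⟩ := exists_quadratic_eq_zero (a := (1 : K)) (b := -b) (c := c) one_ne_zero
    (IsAlgClosed.exists_eq_mul_self _)
  have hroot : z ^ 2 - b * z + c = 0 := by linear_combination hz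
  have hroot' : (b - z) ^ 2 - b * (b - z) + c = 0 := by linear_combination hroot
  have hvieta : ‖c‖ = ‖z‖ * ‖b - z‖ := by
    rw [← norm_mul]; congr 1; linear_combination hroot
  rcases le_total ‖b - z‖ ‖z‖ with h | h
  · exact ⟨z, hroot, by rw [hvieta, sq]; gcongr⟩
  · exact ⟨b - z, hroot', by rw [hvieta, sq]; gcongr⟩

theorem Real.exists_root_gt_of_eval_neg {b c t : ℝ} (h : t ^ 2 - b * t + c < 0) :
    ∃ x : ℝ, x ^ 2 - b * x + c = 0 ∧ t < x := by
  have hdisc : (2 * t - b) ^ 2 < b ^ 2 - 4 * c := by linarith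
  have hsq : √(b ^ 2 - 4 * c) ^ 2 = b ^ 2 - 4 * c := Real.sq_sqrt (by nlinarith)
  refine ⟨(b + √(b ^ 2 - 4 * c)) / 2, by linear_combination hsq / 4, ?_⟩
  have : 2 * t - b < √(b ^ 2 - 4 * c) :=
    lt_of_pow_lt_pow_left₀ 2 (Real.sqrt_nonneg _) (by rwa [hsq])
  linarith

section InertialRoots

variable {η s a : ℝ}

theorem inertial_root_eq_of_optimal (hs : s ^ 2 = 1 - η) (ha : a * η = (1 - s) ^ 2) {z : ℂ}
    (hz : z ^ 2 - (1 + (a : ℂ)) * (η : ℂ) * z + (a : ℂ) * (η : ℂ) = 0) : z = 1 - s := by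
  have hb : (1 + (a : ℂ)) * (η : ℂ) = 2 * (1 - s) := by
    exact_mod_cast (by linear_combination ha + hs : (1 + a) * η = 2 * (1 - s))
  have hc : (a : ℂ) * (η : ℂ) = (1 - s) ^ 2 := by exact_mod_cast ha
  rw [hb, hc] at hz
  exact sub_eq_zero.mp (pow_eq_zero_iff two_ne_zero |>.mp (by linear_combination hz))

theorem exists_inertial_root_norm_gt {a₀ : ℝ} (hs₀ : 0 < s) (hs : s ^ 2 = 1 - η)
    (hη : 0 < η) (ha₀ : a₀ * η = (1 - s) ^ 2) (ha : a ≠ a₀) :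
    ∃ z : ℂ, z ^ 2 - (1 + (a : ℂ)) * (η : ℂ) * z + (a : ℂ) * (η : ℂ) = 0 ∧ 1 - s < ‖z‖ := by
  rcases ha.lt_or_gt with hlt | hgt
  · have heval : (1 - s) ^ 2 - (1 + a) * η * (1 - s) + a * η = s * (a * η - a₀ * η) := by
      rw [ha₀]; linear_combination (s - 1) * hs
    have hneg : (1 - s) ^ 2 - (1 + a) * η * (1 - s) + a * η < 0 := by
      rw [heval]
      exact mul_neg_of_pos_of_neg hs₀ (by nlinarith)
    obtain ⟨x, hx, hgt⟩ := Real.exists_root_gt_of_eval_neg hneg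
    refine ⟨x, by exact_mod_cast hx, ?_⟩
    rw [Complex.norm_real, Real.norm_eq_abs]
    exact hgt.trans_le (le_abs_self x)
  · obtain ⟨z, hz, hnorm⟩ := exists_root_sq_norm_ge ((1 + (a : ℂ)) * (η : ℂ)) ((a : ℂ) * (η : ℂ))
    have hprod : (1 - s) ^ 2 < a * η := by nlinarith
    have hc : ‖(a : ℂ) * (η : ℂ)‖ = a * η := by
      rw [← Complex.ofReal_mul, Complex.norm_real, Real.norm_eq_abs,
        abs_of_pos (by nlinarith [sq_nonneg (1 - s)])]
    exact ⟨z, hz, lt_of_pow_lt_pow_left₀ 2 (norm_nonneg z) (by linarith)⟩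

end InertialRoots

/-- **Optimal inertial parameter and optimal local rate (equations (4.13)–(4.14))**:
for fixed `η ∈ (0,1)`, the maximal root modulus `r(a)` of `σ² − (1+a)ησ + aη = 0`
attains its minimum over `a ∈ [0,1]` uniquely at `a⋆ = (1 − √(1−η))²/η`, with minimum
value `1 − √(1−η)`. -/
theorem optimal_inertial_parameter (η : ℝ) (hη : η ∈ Set.Ioo (0 : ℝ) 1)
    (r : ℝ → ℝ)
    (hr : ∀ a ∈ Set.Icc (0 : ℝ) 1,
      IsGreatest {t : ℝ | ∃ z : ℂ,
        z ^ 2 - (1 + (a : ℂ)) * (η : ℂ) * z + (a : ℂ) * (η : ℂ) = 0 ∧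
        t = ‖z‖} (r a)) :
    (1 - Real.sqrt (1 - η)) ^ 2 / η ∈ Set.Icc (0 : ℝ) 1 ∧
    r ((1 - Real.sqrt (1 - η)) ^ 2 / η) = 1 - Real.sqrt (1 - η) ∧
    ∀ a ∈ Set.Icc (0 : ℝ) 1, a ≠ (1 - Real.sqrt (1 - η)) ^ 2 / η →
      r ((1 - Real.sqrt (1 - η)) ^ 2 / η) < r a := by
  obtain ⟨hη₀, hη₁⟩ := hη
  set s := √(1 - η)
  set a₀ := (1 - s) ^ 2 / η
  have hs : s ^ 2 = 1 - η := Real.sq_sqrt (by linarith)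
  have hs₀ : 0 < s := Real.sqrt_pos.mpr (by linarith)
  have ha₀ : a₀ * η = (1 - s) ^ 2 := div_mul_cancel₀ _ hη₀.ne'
  have hmem : a₀ ∈ Set.Icc (0 : ℝ) 1 := ⟨by positivity, by rw [div_le_one hη₀]; nlinarith⟩
  have hval : r a₀ = 1 - s := by
    obtain ⟨z, hz, hrz⟩ := (hr a₀ hmem).1
    rw [hrz, inertial_root_eq_of_optimal hs ha₀ hz, ← Complex.ofReal_one, ← Complex.ofReal_sub,
      Complex.norm_real, Real.norm_eq_abs, abs_of_nonneg (by nlinarith)]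
  refine ⟨hmem, hval, fun a ha hne => ?_⟩
  obtain ⟨z, hz, hlt⟩ := exists_inertial_root_norm_gt hs₀ hs hη₀ ha₀ hne
  exact hval ▸ hlt.trans_le ((hr a ha).2 ⟨z, hz, rfl⟩)
end

section
/- Fix η ∈ (0, 1) and set a⋆ = (1 − √(1−η))²/η. For every a ∈ (a⋆, 1], the two roots of σ² − (1+a)·η·σ + a·η = 0 are non-real complex conjugates, each of modulus √(a·η); in particular, for a = 1 both roots have modulus √η, which is strictly larger than η. (Oscillation regime of inertial schemes and the local rate of FISTA, Section 4.4.) -/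
/-!
A monic real quadratic `z² - b z + c` with negative discriminant `b² - 4c` has no real root, its
roots come in a conjugate pair `z, z̄`, and Vieta gives `|z|² = z z̄ = c`. For
`σ² - (1+a)ησ + aη` the discriminant is `η ((1+a)²η - 4a)`, and with `s = √(1-η)` one has
`4a - (1+a)²η = ((1+a)s)² - (1-a)²`, which is positive exactly when `a > (1-s)/(1+s) = (1-s)²/η`.
-/

open ComplexConjugate

section RealQuadratic

variable {b c : ℝ} {z : ℂ}

theorem conj_root_of_real_quadratic (hz : z ^ 2 - (b : ℂ) * z + (c : ℂ) = 0) :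
    conj z ^ 2 - (b : ℂ) * conj z + (c : ℂ) = 0 := by
  simpa using congrArg conj hz

theorem im_ne_zero_of_real_quadratic (hdisc : b ^ 2 < 4 * c)
    (hz : z ^ 2 - (b : ℂ) * z + (c : ℂ) = 0) : z.im ≠ 0 := by
  intro him
  obtain ⟨x, rfl⟩ := Complex.conj_eq_iff_real.1 (Complex.conj_eq_iff_im.2 him)
  have hx : x ^ 2 - b * x + c = 0 := by exact_mod_cast hz
  nlinarith [sq_nonneg (2 * x - b)]

/-- Vieta's product formula for the conjugate pair `z, z̄` of distinct roots. -/
theorem normSq_eq_of_real_quadratic (him : z.im ≠ 0)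
    (hz : z ^ 2 - (b : ℂ) * z + (c : ℂ) = 0) : Complex.normSq z = c := by
  have hsub : z - conj z ≠ 0 := by
    rw [Complex.sub_conj]
    simpa using him
  have hsum : z + conj z = b := by
    have hfactor : (z - conj z) * (z + conj z - b) = 0 := by
      linear_combination hz - conj_root_of_real_quadratic hz
    linear_combination (mul_eq_zero.1 hfactor).resolve_left hsub
  have hprod : z * conj z = c := by
    linear_combination z * hsum - hz
  exact_mod_cast (Complex.mul_conj z).symm.trans hprod

theorem real_quadratic_root_of_discrim_neg (hdisc : b ^ 2 < 4 * c)
    (hz : z ^ 2 - (b : ℂ) * z + (c : ℂ) = 0) :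
    z.im ≠ 0 ∧ conj z ^ 2 - (b : ℂ) * conj z + (c : ℂ) = 0 ∧ ‖z‖ = Real.sqrt c := by
  have him := im_ne_zero_of_real_quadratic hdisc hz
  refine ⟨him, conj_root_of_real_quadratic hz, ?_⟩
  rw [Complex.norm_def, normSq_eq_of_real_quadratic him hz]

end RealQuadratic

theorem inertial_discrim_neg {η a : ℝ} (hη : η ∈ Set.Ioo (0 : ℝ) 1)
    (ha : (1 - Real.sqrt (1 - η)) ^ 2 / η < a) (ha1 : a ≤ 1) :
    ((1 + a) * η) ^ 2 < 4 * (a * η) := by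
  obtain ⟨hη0, hη1⟩ := hη
  set s := Real.sqrt (1 - η)
  have hs0 : 0 < s := Real.sqrt_pos.2 (by linarith)
  have hss : s ^ 2 = 1 - η := Real.sq_sqrt (by linarith)
  have ha' : (1 - s) ^ 2 < a * η := (div_lt_iff₀ hη0).1 ha
  have ha0 : 0 < a := by nlinarith [sq_nonneg (1 - s)]
  have hlow : 1 - a < (1 + a) * s := by nlinarith
  have hgap : 0 < 4 * a - (1 + a) ^ 2 * η := by
    have hdiff : 4 * a - (1 + a) ^ 2 * η = ((1 + a) * s) ^ 2 - (1 - a) ^ 2 := by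
      rw [mul_pow, hss]; ring
    rw [hdiff]
    nlinarith
  nlinarith

/-- **Oscillation regime of inertial schemes and local rate of FISTA (Section 4.4)**:
for `η ∈ (0,1)` and `a ∈ (a⋆, 1]` with `a⋆ = (1 − √(1−η))²/η`, the two roots of
`σ² − (1+a)ησ + aη = 0` are non-real complex conjugates of modulus `√(aη)`; in
particular for `a = 1` both roots have modulus `√η`, which is strictly larger than `η`. -/
theorem fista_oscillation_regime (η : ℝ) (hη : η ∈ Set.Ioo (0 : ℝ) 1) :
    (∀ a : ℝ, (1 - Real.sqrt (1 - η)) ^ 2 / η < a → a ≤ 1 →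
      ∀ z : ℂ, z ^ 2 - (1 + (a : ℂ)) * (η : ℂ) * z + (a : ℂ) * (η : ℂ) = 0 →
        z.im ≠ 0 ∧
        (starRingEnd ℂ z) ^ 2 - (1 + (a : ℂ)) * (η : ℂ) * (starRingEnd ℂ z)
          + (a : ℂ) * (η : ℂ) = 0 ∧
        ‖z‖ = Real.sqrt (a * η)) ∧
    (∀ z : ℂ, z ^ 2 - 2 * (η : ℂ) * z + (η : ℂ) = 0 →
      ‖z‖ = Real.sqrt η) ∧
    η < Real.sqrt η := by
  refine ⟨fun a ha ha1 z hz => ?_, fun z hz => ?_, ?_⟩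
  · have h := real_quadratic_root_of_discrim_neg (b := (1 + a) * η) (c := a * η)
      (inertial_discrim_neg hη ha ha1) (by push_cast; exact hz)
    push_cast at h
    exact h
  · have hdisc : (2 * η) ^ 2 < 4 * η := by nlinarith [hη.1, hη.2]
    exact (real_quadratic_root_of_discrim_neg hdisc (by push_cast; exact hz)).2.2
  · exact (Real.lt_sqrt hη.1.le).2 (by nlinarith [hη.1, hη.2])
end
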